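/- arXiv:2410.20085 — 9 statements merged into one kernel-verified Lean document; each statement's English description precedes it below -/
import Mathlib

section
/- Let x, z: I → ℝ be C^∞ functions on an open interval I, let λ ≠ 0, let r(u,v) = (x(u)cos v, x(u)sin v, z(u)+λv), and let c(u) = (x(u)cos(z(u)/λ), x(u)sin(z(u)/λ)). Then for every (u₀,v₀) ∈ I × ℝ, the germ of r at (u₀,v₀) is A-equivalent to the germ at (u₀,v₀) of the map (u,v) ↦ (c(u), v): that is, there exist C^∞ diffeomorphism-germs φ of (ℝ², (u₀,v₀)) and Φ of (ℝ³, r(u₀,v₀)) such that Φ ∘ r ∘ φ⁻¹ (u,v) = (c(u), v + const) near (u₀,v₀) after composing with a translation in the last coordinate. -/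
noncomputable section

open Real

/-- `φ` restricted to the open set `U` is a `C^∞` diffeomorphism onto its open image. -/
def LocalDiffeoOn {E F : Type*} [NormedAddCommGroup E] [NormedSpace ℝ E]
    [NormedAddCommGroup F] [NormedSpace ℝ F] (φ : E → F) (U : Set E) : Prop :=
  IsOpen U ∧ ContDiffOn ℝ (⊤ : ℕ∞) φ U ∧ IsOpen (φ '' U) ∧
    ∃ ψ : F → E, ContDiffOn ℝ (⊤ : ℕ∞) ψ (φ '' U) ∧
      (∀ p ∈ U, ψ (φ p) = p) ∧ ∀ q ∈ φ '' U, φ (ψ q) = q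

/-- The germ of `f` at `p` is `A`-equivalent to the germ of `g` at `q`:
there are diffeomorphism-germs `φ` of the source (with `φ p = q`) and `Φ` of the
target such that `Φ ∘ f = g ∘ φ` near `p`. -/
def AEquivGermAt {E F : Type*} [NormedAddCommGroup E] [NormedSpace ℝ E]
    [NormedAddCommGroup F] [NormedSpace ℝ F]
    (f : E → F) (p : E) (g : E → F) (q : E) : Prop :=
  ∃ (φ : E → E) (U : Set E) (Φ : F → F) (V : Set F),
    LocalDiffeoOn φ U ∧ p ∈ U ∧ φ p = q ∧
    LocalDiffeoOn Φ V ∧ (∀ y ∈ U, f y ∈ V) ∧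
    ∀ y ∈ U, Φ (f y) = g (φ y)

/-- A plane curve has a `j/i`-cusp at `u₀` : its germ there is `A`-equivalent to
the germ of `t ↦ (t^i, t^j)` at the origin. -/
def HasCusp (i j : ℕ) (c : ℝ → ℝ × ℝ) (u₀ : ℝ) : Prop :=
  AEquivGermAt c u₀ (fun t => (t ^ i, t ^ j)) 0

/-- A map `ℝ² → ℝ³` is a `j/i`-cuspidal edge at `p` : its germ there is
`A`-equivalent to the germ of `(u,v) ↦ (u, v^i, v^j)` at the origin. -/
def IsCuspidalEdge (i j : ℕ) (f : ℝ × ℝ → ℝ × ℝ × ℝ) (p : ℝ × ℝ) : Prop :=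
  AEquivGermAt f p (fun q => (q.1, q.2 ^ i, q.2 ^ j)) (0, 0)

/-- Euclidean dot product on `ℝ³ = ℝ × ℝ × ℝ`. -/
def dot3 (v w : ℝ × ℝ × ℝ) : ℝ := v.1 * w.1 + v.2.1 * w.2.1 + v.2.2 * w.2.2

/-- Vector (cross) product on `ℝ³ = ℝ × ℝ × ℝ`. -/
def cross3 (v w : ℝ × ℝ × ℝ) : ℝ × ℝ × ℝ :=
  (v.2.1 * w.2.2 - v.2.2 * w.2.1, v.2.2 * w.1 - v.1 * w.2.2, v.1 * w.2.1 - v.2.1 * w.1)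

/-- Determinant of the `2 × 2` matrix with columns `v, w`. -/
def det2 (v w : ℝ × ℝ) : ℝ := v.1 * w.2 - v.2 * w.1

/-- Partial derivative in the first variable. -/
def pderivU {F : Type*} [NormedAddCommGroup F] [NormedSpace ℝ F]
    (f : ℝ × ℝ → F) (p : ℝ × ℝ) : F := deriv (fun u => f (u, p.2)) p.1

/-- Partial derivative in the second variable. -/
def pderivV {F : Type*} [NormedAddCommGroup F] [NormedSpace ℝ F]
    (f : ℝ × ℝ → F) (p : ℝ × ℝ) : F := deriv (fun v => f (p.1, v)) p.2

/-- The helicoidal surface `r` is, at every point, a `c`-edge: its germ at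
`(u₀, v₀)` is `A`-equivalent to the germ of `(u, v) ↦ (c u, v)` at `(u₀, v₀)`. -/
theorem helicoidal_is_c_edge
    (I : Set ℝ) (hIo : IsOpen I) (hIc : I.OrdConnected)
    (x z : ℝ → ℝ)
    (hx : ContDiffOn ℝ (⊤ : ℕ∞) x I) (hz : ContDiffOn ℝ (⊤ : ℕ∞) z I)
    (lam : ℝ) (hlam : lam ≠ 0)
    (r : ℝ × ℝ → ℝ × ℝ × ℝ)
    (hr : ∀ u v : ℝ, r (u, v) = (x u * cos v, x u * sin v, z u + lam * v))
    (c : ℝ → ℝ × ℝ)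
    (hc : ∀ u : ℝ, c u = (x u * cos (z u / lam), x u * sin (z u / lam)))
    (u₀ : ℝ) (hu₀ : u₀ ∈ I) (v₀ : ℝ) :
    AEquivGermAt r (u₀, v₀) (fun q => ((c q.1).1, (c q.1).2, q.2)) (u₀, v₀) := by
    classical
  set d : ℝ → ℝ := fun u => (z u - z u₀) / lam with hd
  set φ : ℝ × ℝ → ℝ × ℝ := fun p => (p.1, p.2 + d p.1) with hφ
  set ψ : ℝ × ℝ → ℝ × ℝ := fun p => (p.1, p.2 - d p.1) with hψ
  set Φ : ℝ × ℝ × ℝ → ℝ × ℝ × ℝ := fun q =>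
    (q.1 * cos (q.2.2 / lam) + q.2.1 * sin (q.2.2 / lam),
     q.1 * sin (q.2.2 / lam) - q.2.1 * cos (q.2.2 / lam),
     q.2.2 / lam - z u₀ / lam) with hΦ
  set Ψ : ℝ × ℝ × ℝ → ℝ × ℝ × ℝ := fun q =>
    (q.1 * cos (q.2.2 + z u₀ / lam) + q.2.1 * sin (q.2.2 + z u₀ / lam),
     q.1 * sin (q.2.2 + z u₀ / lam) - q.2.1 * cos (q.2.2 + z u₀ / lam),
     lam * (q.2.2 + z u₀ / lam)) with hΨ
  have hzI : ContDiffOn ℝ (⊤ : ℕ∞) (fun p : ℝ × ℝ => z p.1) (I ×ˢ Set.univ) :=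
    hz.comp contDiff_fst.contDiffOn (fun p hp => hp.1)
  have hdsm : ContDiffOn ℝ (⊤ : ℕ∞) (fun p : ℝ × ℝ => d p.1) (I ×ˢ Set.univ) := by
    simp only [hd]
    exact (hzI.sub contDiffOn_const).div_const lam
  have hφψ : ∀ p : ℝ × ℝ, φ (ψ p) = p := by
    rintro ⟨a, b⟩; simp only [hφ, hψ]; exact Prod.ext rfl (by ring)
  have hψφ : ∀ p : ℝ × ℝ, ψ (φ p) = p := by
    rintro ⟨a, b⟩; simp only [hφ, hψ]; exact Prod.ext rfl (by ring)
  have himg : φ '' (I ×ˢ Set.univ) = I ×ˢ Set.univ := by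
    ext q
    constructor
    · rintro ⟨p, hp, rfl⟩; exact ⟨hp.1, trivial⟩
    · intro hq; exact ⟨ψ q, ⟨hq.1, trivial⟩, hφψ q⟩
  have hΦsm : ContDiff ℝ (⊤ : ℕ∞) Φ := by
    have h0 : ContDiff ℝ (⊤ : ℕ∞) (fun q : ℝ × ℝ × ℝ => q.2.2 / lam) :=
      contDiff_snd.snd.div_const lam
    have hc0 : ContDiff ℝ (⊤ : ℕ∞) (fun q : ℝ × ℝ × ℝ => cos (q.2.2 / lam)) :=
      Real.contDiff_cos.comp h0
    have hs0 : ContDiff ℝ (⊤ : ℕ∞) (fun q : ℝ × ℝ × ℝ => sin (q.2.2 / lam)) :=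
      Real.contDiff_sin.comp h0
    exact ((contDiff_fst.mul hc0).add (contDiff_snd.fst.mul hs0)).prodMk
      (((contDiff_fst.mul hs0).sub (contDiff_snd.fst.mul hc0)).prodMk
        (h0.sub contDiff_const))
  have hΨsm : ContDiff ℝ (⊤ : ℕ∞) Ψ := by
    have h0 : ContDiff ℝ (⊤ : ℕ∞) (fun q : ℝ × ℝ × ℝ => q.2.2 + z u₀ / lam) :=
      contDiff_snd.snd.add contDiff_const
    have hc0 : ContDiff ℝ (⊤ : ℕ∞) (fun q : ℝ × ℝ × ℝ => cos (q.2.2 + z u₀ / lam)) :=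
      Real.contDiff_cos.comp h0
    have hs0 : ContDiff ℝ (⊤ : ℕ∞) (fun q : ℝ × ℝ × ℝ => sin (q.2.2 + z u₀ / lam)) :=
      Real.contDiff_sin.comp h0
    exact ((contDiff_fst.mul hc0).add (contDiff_snd.fst.mul hs0)).prodMk
      (((contDiff_fst.mul hs0).sub (contDiff_snd.fst.mul hc0)).prodMk
        (contDiff_const.mul h0))
  have hΦΨ : ∀ q : ℝ × ℝ × ℝ, Φ (Ψ q) = q := by
    rintro ⟨a, b, w⟩
    simp only [hΦ, hΨ]
    have hw : lam * (w + z u₀ / lam) / lam = w + z u₀ / lam := by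
      field_simp
    rw [hw]
    refine Prod.ext ?_ (Prod.ext ?_ ?_)
    · simp only
      linear_combination a * (sin_sq_add_cos_sq (w + z u₀ / lam))
    · simp only
      linear_combination b * (sin_sq_add_cos_sq (w + z u₀ / lam))
    · simp only
      field_simp
      ring
  have hΨΦ : ∀ q : ℝ × ℝ × ℝ, Ψ (Φ q) = q := by
    rintro ⟨a, b, w⟩
    simp only [hΦ, hΨ]
    have hw : w / lam - z u₀ / lam + z u₀ / lam = w / lam := by ring
    rw [hw]
    refine Prod.ext ?_ (Prod.ext ?_ ?_)
    · simp only
      linear_combination a * (sin_sq_add_cos_sq (w / lam))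
    · simp only
      linear_combination b * (sin_sq_add_cos_sq (w / lam))
    · simp only
      field_simp
  have hΦimg : Φ '' (Set.univ : Set (ℝ × ℝ × ℝ)) = Set.univ := by
    ext q
    simp only [Set.image_univ, Set.mem_univ, iff_true, Set.mem_range]
    exact ⟨Ψ q, hΦΨ q⟩
  refine ⟨φ, I ×ˢ Set.univ, Φ, Set.univ, ?_, ⟨hu₀, trivial⟩, ?_, ?_,
    fun y _ => trivial, ?_⟩
  · refine ⟨hIo.prod isOpen_univ, ?_, ?_, ψ, ?_, fun p _ => hψφ p, fun q hq => ?_⟩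
    · exact contDiffOn_fst.prodMk (contDiffOn_snd.add hdsm)
    · rw [himg]; exact hIo.prod isOpen_univ
    · rw [himg]
      exact contDiffOn_fst.prodMk (contDiffOn_snd.sub hdsm)
    · exact hφψ q
  · simp only [hφ, hd]
    exact Prod.ext rfl (by ring)
  · exact ⟨isOpen_univ, hΦsm.contDiffOn, by rw [hΦimg]; exact isOpen_univ,
      Ψ, hΨsm.contDiffOn, fun p _ => hΨΦ p, fun q _ => hΦΨ q⟩
  · rintro ⟨u, v⟩ -
    simp only [hr, hc, hΦ, hφ, hd]
    have hang : (z u + lam * v) / lam = z u / lam + v := by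
      field_simp
    rw [hang, cos_add, sin_add]
    refine Prod.ext ?_ (Prod.ext ?_ ?_)
    · simp only
      linear_combination x u * cos (z u / lam) * (sin_sq_add_cos_sq v)
    · simp only
      linear_combination x u * sin (z u / lam) * (sin_sq_add_cos_sq v)
    · simp only
      field_simp
      ring
end
end

section
/- Let (γ,ν): I → ℝ² × S¹ be a Legendre curve with γ(u) = (x(u), z(u)), ν(u) = (a(u), b(u)) and curvature (ℓ,β), let λ ≠ 0, and let r(u,v) = (x(u)cos v, x(u)sin v, z(u)+λv). Then the cross product of the partial derivatives satisfies r_u(u,v) × r_v(u,v) = -β(u)x(u)·(a(u)cos v, a(u)sin v, b(u)) + λβ(u)b(u)·(-sin v, cos v, 0) for all (u,v). Consequently, the differential of r at (u,v) fails to be injective (i.e., (u,v) is a singular point of r) if and only if β(u) = 0 or (x(u), b(u)) = (0,0). -/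
noncomputable section

open Real

/-- Cross product of the partials of the helicoidal surface, and the
characterization of its singular points. -/
theorem helicoidal_cross_product_and_singular_points
    (I : Set ℝ) (hIo : IsOpen I) (hIc : I.OrdConnected)
    (x z a b ℓ β : ℝ → ℝ)
    (hx : ContDiffOn ℝ (⊤ : ℕ∞) x I) (hz : ContDiffOn ℝ (⊤ : ℕ∞) z I)
    (ha : ContDiffOn ℝ (⊤ : ℕ∞) a I) (hb : ContDiffOn ℝ (⊤ : ℕ∞) b I)
    (hunit : ∀ u ∈ I, a u ^ 2 + b u ^ 2 = 1)
    (hLeg : ∀ u ∈ I, deriv x u * a u + deriv z u * b u = 0)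
    (hl : ∀ u ∈ I, ℓ u = -(deriv a u) * b u + deriv b u * a u)
    (hβ : ∀ u ∈ I, β u = -(deriv x u) * b u + deriv z u * a u)
    (lam : ℝ) (hlam : lam ≠ 0)
    (r : ℝ × ℝ → ℝ × ℝ × ℝ)
    (hr : ∀ u v : ℝ, r (u, v) = (x u * cos v, x u * sin v, z u + lam * v))
    : ∀ u ∈ I, ∀ v : ℝ,
      cross3 (pderivU r (u, v)) (pderivV r (u, v)) =
        (-(β u * x u)) • ((a u * cos v, a u * sin v, b u) : ℝ × ℝ × ℝ) +
          (lam * β u * b u) • ((-sin v, cos v, 0) : ℝ × ℝ × ℝ) ∧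
      (¬ Function.Injective ⇑(fderiv ℝ r (u, v)) ↔
        β u = 0 ∨ (x u = 0 ∧ b u = 0)) := by
  intro u hu v
  have hsc : sin v ^ 2 + cos v ^ 2 = 1 := sin_sq_add_cos_sq v
  have hu1 := hunit u hu
  have hu2 := hLeg u hu
  have hu3 := hβ u hu
  have hxA : DifferentiableAt ℝ x u :=
    (hx.differentiableOn (by simp)).differentiableAt (hIo.mem_nhds hu)
  have hzA : DifferentiableAt ℝ z u :=
    (hz.differentiableOn (by simp)).differentiableAt (hIo.mem_nhds hu)
  have hX' : deriv x u = -(β u * b u) := by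
    linear_combination a u * hu2 + b u * hu3 - deriv x u * hu1
  have hZ' : deriv z u = β u * a u := by
    linear_combination b u * hu2 - a u * hu3 - deriv z u * hu1
  have hru : HasDerivAt (fun u' => r (u', v))
      (deriv x u * cos v, deriv x u * sin v, deriv z u) u := by
    have he : (fun u' => r (u', v)) =
        fun u' => (x u' * cos v, x u' * sin v, z u' + lam * v) := funext fun u' => hr u' v
    rw [he]
    exact (hxA.hasDerivAt.mul_const _).prodMk
      ((hxA.hasDerivAt.mul_const _).prodMk (hzA.hasDerivAt.add_const _))
  have hrv : HasDerivAt (fun v' => r (u, v'))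
      (x u * -sin v, x u * cos v, lam) v := by
    have he : (fun v' => r (u, v')) =
        fun v' => (x u * cos v', x u * sin v', z u + lam * v') := funext fun v' => hr u v'
    rw [he]
    refine ((Real.hasDerivAt_cos v).const_mul (x u)).prodMk
      (((Real.hasDerivAt_sin v).const_mul (x u)).prodMk ?_)
    simpa using ((hasDerivAt_id v).const_mul lam).const_add (z u)
  have hpU : pderivU r (u, v) = (deriv x u * cos v, deriv x u * sin v, deriv z u) := hru.deriv
  have hpV : pderivV r (u, v) = (x u * -sin v, x u * cos v, lam) := hrv.deriv
  constructor
  · rw [hpU, hpV]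
    simp only [cross3, Prod.smul_mk, smul_eq_mul, Prod.mk_add_mk, Prod.mk.injEq]
    refine ⟨?_, ?_, ?_⟩
    · rw [hX', hZ']; ring
    · rw [hX', hZ']; ring
    · rw [hX']; linear_combination (-(β u * b u * x u)) * hsc
  · have hF : DifferentiableAt ℝ r (u, v) := by
      have he : r = fun p : ℝ × ℝ => (x p.1 * cos p.2, x p.1 * sin p.2, z p.1 + lam * p.2) :=
        funext fun p => hr p.1 p.2
      rw [he]
      exact ((hxA.comp (u, v) differentiableAt_fst).mul
          ((Real.differentiable_cos.differentiableAt).comp (u, v) differentiableAt_snd)).prodMk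
        (((hxA.comp (u, v) differentiableAt_fst).mul
          ((Real.differentiable_sin.differentiableAt).comp (u, v) differentiableAt_snd)).prodMk
        ((hzA.comp (u, v) differentiableAt_fst).add (differentiableAt_snd.const_mul lam)))
    have hL1 : fderiv ℝ r (u, v) (1, 0) =
        (deriv x u * cos v, deriv x u * sin v, deriv z u) := by
      have hg : HasDerivAt (fun u' : ℝ => (u', v)) ((1 : ℝ), (0 : ℝ)) u :=
        (hasDerivAt_id u).prodMk (hasDerivAt_const u v)
      exact (hF.hasFDerivAt.comp_hasDerivAt u hg).unique hru
    have hL2 : fderiv ℝ r (u, v) (0, 1) = (x u * -sin v, x u * cos v, lam) := by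
      have hg : HasDerivAt (fun v' : ℝ => (u, v')) ((0 : ℝ), (1 : ℝ)) v :=
        (hasDerivAt_const v u).prodMk (hasDerivAt_id v)
      exact (hF.hasFDerivAt.comp_hasDerivAt v hg).unique hrv
    have hLst : ∀ s t : ℝ, fderiv ℝ r (u, v) (s, t) =
        (s * (deriv x u * cos v) + t * (x u * -sin v),
         s * (deriv x u * sin v) + t * (x u * cos v),
         s * deriv z u + t * lam) := by
      intro s t
      have h : ((s, t) : ℝ × ℝ) = s • ((1 : ℝ), (0 : ℝ)) + t • ((0 : ℝ), (1 : ℝ)) := by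
        simp
      rw [h, map_add, map_smul, map_smul, hL1, hL2]
      simp [Prod.ext_iff]
    constructor
    · intro hni
      by_contra hc
      push_neg at hc
      obtain ⟨hb0, hxb⟩ := hc
      apply hni
      intro p q hpq
      have h0 : fderiv ℝ r (u, v) (p - q) = 0 := by rw [map_sub, hpq, sub_self]
      have h0' : fderiv ℝ r (u, v) (p.1 - q.1, p.2 - q.2) = 0 := h0
      set s := p.1 - q.1 with hs_def
      set t := p.2 - q.2 with ht_def
      rw [hLst s t] at h0'
      rw [Prod.ext_iff, Prod.ext_iff] at h0'
      obtain ⟨E1, E2, E3⟩ := h0'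
      simp only [Prod.fst_zero, Prod.snd_zero] at E1 E2 E3
      have hsX' : s * deriv x u = 0 := by
        linear_combination cos v * E1 + sin v * E2 - s * deriv x u * hsc
      have htX : t * x u = 0 := by
        linear_combination (-sin v) * E1 + cos v * E2 - t * x u * hsc
      have hsB : s * b u = 0 := by
        have h := hsX'
        rw [hX'] at h
        have h2 : β u * (s * b u) = 0 := by linear_combination -h
        exact (mul_eq_zero.mp h2).resolve_left hb0
      have hst : s = 0 ∧ t = 0 := by
        by_cases hxu : x u = 0
        · have hbne := hxb hxu
          have hs : s = 0 := (mul_eq_zero.mp hsB).resolve_right hbne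
          have ht : t = 0 := by
            have h := E3
            rw [hs] at h
            simpa [hlam] using h
          exact ⟨hs, ht⟩
        · have ht : t = 0 := (mul_eq_zero.mp htX).resolve_right hxu
          have hsZ : s * deriv z u = 0 := by
            have h := E3
            rw [ht] at h
            linarith
          have hsA : s * a u = 0 := by
            have h := hsZ
            rw [hZ'] at h
            have h2 : β u * (s * a u) = 0 := by linear_combination h
            exact (mul_eq_zero.mp h2).resolve_left hb0
          have hs2 : s ^ 2 = 0 := by
            linear_combination (s * a u) * hsA + (s * b u) * hsB - s ^ 2 * hu1
          exact ⟨(pow_eq_zero_iff two_ne_zero).mp hs2, ht⟩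
      have h1 : p.1 = q.1 := by have := hst.1; rw [hs_def] at this; linarith
      have h2 : p.2 = q.2 := by have := hst.2; rw [ht_def] at this; linarith
      exact Prod.ext h1 h2
    · intro hcond hinj
      have hX'0 : deriv x u = 0 := by
        rw [hX']
        rcases hcond with h | ⟨h1, h2⟩
        · simp [h]
        · simp [h2]
      have hZX : deriv z u * x u = 0 := by
        rw [hZ']
        rcases hcond with h | ⟨h1, h2⟩
        · simp [h]
        · simp [h1]
      have hZXl : deriv z u / lam * x u = 0 := by
        rw [div_mul_eq_mul_div, hZX, zero_div]
      have hker : fderiv ℝ r (u, v) (1, -(deriv z u / lam)) = 0 := by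
        rw [hLst]
        refine Prod.ext ?_ (Prod.ext ?_ ?_)
        · show (1 : ℝ) * (deriv x u * cos v) + -(deriv z u / lam) * (x u * -sin v) = 0
          linear_combination cos v * hX'0 + sin v * hZXl
        · show (1 : ℝ) * (deriv x u * sin v) + -(deriv z u / lam) * (x u * cos v) = 0
          linear_combination sin v * hX'0 - cos v * hZXl
        · show (1 : ℝ) * deriv z u + -(deriv z u / lam) * lam = 0
          field_simp
          ring
      have := hinj (hker.trans (map_zero (fderiv ℝ r (u, v))).symm)
      rw [Prod.ext_iff] at this
      exact one_ne_zero this.1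
end
end

section
/- Let (γ,ν): I → ℝ² × S¹ be a Legendre curve with γ(u) = (x(u), z(u)), ν(u) = (a(u), b(u)) and curvature (ℓ,β), let λ ≠ 0, and let r(u,v) = (x(u)cos v, x(u)sin v, z(u)+λv). Define ν₁(u,v) = (a(u)cos v, a(u)sin v, b(u)), ν₂(u,v) = (-sin v, cos v, 0) and ν₃ = ν₁ × ν₂. Then: (i) |ν₁| = |ν₂| = 1 and ν₁·ν₂ = 0; (ii) ν₃(u,v) = (-b(u)cos v, -b(u)sin v, a(u)); (iii) r_u(u,v) = β(u)·ν₃(u,v) and r_v(u,v) = λb(u)·ν₁(u,v) + x(u)·ν₂(u,v) + λa(u)·ν₃(u,v); (iv) partial derivatives of the frame satisfy ν₁ᵤ = ℓ(u)ν₃, ν₂ᵤ = 0, ν₁ᵥ·ν₂ = a(u), ν₁ᵥ·ν₃ = 0, ν₂ᵥ·ν₃ = b(u). In particular r_u × r_v = -β(u)x(u)·ν₁ + λβ(u)b(u)·ν₂, so (r,ν₁,ν₂) is a generalised framed surface. -/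
noncomputable section

open Real

/-- The helicoidal surface together with the frame `ν₁, ν₂` is a generalised
framed surface, with the listed frame computations. -/
theorem helicoidal_generalised_framed_surface
    (I : Set ℝ) (hIo : IsOpen I) (hIc : I.OrdConnected)
    (x z a b ℓ β : ℝ → ℝ)
    (hx : ContDiffOn ℝ (⊤ : ℕ∞) x I) (hz : ContDiffOn ℝ (⊤ : ℕ∞) z I)
    (ha : ContDiffOn ℝ (⊤ : ℕ∞) a I) (hb : ContDiffOn ℝ (⊤ : ℕ∞) b I)
    (hunit : ∀ u ∈ I, a u ^ 2 + b u ^ 2 = 1)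
    (hLeg : ∀ u ∈ I, deriv x u * a u + deriv z u * b u = 0)
    (hl : ∀ u ∈ I, ℓ u = -(deriv a u) * b u + deriv b u * a u)
    (hβ : ∀ u ∈ I, β u = -(deriv x u) * b u + deriv z u * a u)
    (lam : ℝ) (hlam : lam ≠ 0)
    (r : ℝ × ℝ → ℝ × ℝ × ℝ)
    (hr : ∀ u v : ℝ, r (u, v) = (x u * cos v, x u * sin v, z u + lam * v))
    (ν₁ ν₂ : ℝ × ℝ → ℝ × ℝ × ℝ)
    (hν₁ : ∀ u v : ℝ, ν₁ (u, v) = (a u * cos v, a u * sin v, b u))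
    (hν₂ : ∀ u v : ℝ, ν₂ (u, v) = (-sin v, cos v, 0)) :
    ∀ u ∈ I, ∀ v : ℝ,
      dot3 (ν₁ (u, v)) (ν₁ (u, v)) = 1 ∧
      dot3 (ν₂ (u, v)) (ν₂ (u, v)) = 1 ∧
      dot3 (ν₁ (u, v)) (ν₂ (u, v)) = 0 ∧
      cross3 (ν₁ (u, v)) (ν₂ (u, v)) = (-(b u) * cos v, -(b u) * sin v, a u) ∧
      pderivU r (u, v) = β u • cross3 (ν₁ (u, v)) (ν₂ (u, v)) ∧
      pderivV r (u, v) =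
        (lam * b u) • ν₁ (u, v) + x u • ν₂ (u, v) +
          (lam * a u) • cross3 (ν₁ (u, v)) (ν₂ (u, v)) ∧
      pderivU ν₁ (u, v) = ℓ u • cross3 (ν₁ (u, v)) (ν₂ (u, v)) ∧
      pderivU ν₂ (u, v) = 0 ∧
      dot3 (pderivV ν₁ (u, v)) (ν₂ (u, v)) = a u ∧
      dot3 (pderivV ν₁ (u, v)) (cross3 (ν₁ (u, v)) (ν₂ (u, v))) = 0 ∧
      dot3 (pderivV ν₂ (u, v)) (cross3 (ν₁ (u, v)) (ν₂ (u, v))) = b u ∧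
      cross3 (pderivU r (u, v)) (pderivV r (u, v)) =
        (-(β u * x u)) • ν₁ (u, v) + (lam * β u * b u) • ν₂ (u, v) := by
  intro u hu v
  have hne : (⊤ : ℕ∞) ≠ 0 := by norm_num
  have hxd : HasDerivAt x (deriv x u) u :=
    (((hx u hu).contDiffAt (hIo.mem_nhds hu)).differentiableAt (by simp)).hasDerivAt
  have hzd : HasDerivAt z (deriv z u) u :=
    (((hz u hu).contDiffAt (hIo.mem_nhds hu)).differentiableAt (by simp)).hasDerivAt
  have had : HasDerivAt a (deriv a u) u :=
    (((ha u hu).contDiffAt (hIo.mem_nhds hu)).differentiableAt (by simp)).hasDerivAt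
  have hbd : HasDerivAt b (deriv b u) u :=
    (((hb u hu).contDiffAt (hIo.mem_nhds hu)).differentiableAt (by simp)).hasDerivAt
  -- derivative of a² + b² is zero
  have hsq : HasDerivAt (fun t => a t ^ 2 + b t ^ 2)
      (2 * a u * deriv a u + 2 * b u * deriv b u) u := by
    have h1 : HasDerivAt (fun t => a t ^ 2) (2 * a u * deriv a u) u := by
      have := had.fun_pow 2; simpa [mul_comm, mul_assoc, mul_left_comm] using this
    have h2 : HasDerivAt (fun t => b t ^ 2) (2 * b u * deriv b u) u := by
      have := hbd.fun_pow 2; simpa [mul_comm, mul_assoc, mul_left_comm] using this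
    exact h1.add h2
  have hconst : (fun t => a t ^ 2 + b t ^ 2) =ᶠ[nhds u] fun _ => (1 : ℝ) := by
    filter_upwards [hIo.mem_nhds hu] with t ht using hunit t ht
  have hzero : 2 * a u * deriv a u + 2 * b u * deriv b u = 0 := by
    have h0 : HasDerivAt (fun _ : ℝ => (1 : ℝ)) 0 u := hasDerivAt_const _ _
    have := (hsq.congr_of_eventuallyEq hconst.symm).unique h0
    linarith [this]
  have hab : a u * deriv a u + b u * deriv b u = 0 := by linarith
  -- solve for derivatives
  have hunit' := hunit u hu
  have hLeg' := hLeg u hu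
  have hl' := hl u hu
  have hβ' := hβ u hu
  have hx' : deriv x u = -(β u) * b u := by
    linear_combination (-(deriv x u)) * hunit' + (b u) * hβ' + (a u) * hLeg'
  have hz' : deriv z u = β u * a u := by
    linear_combination (-(deriv z u)) * hunit' + (-(a u)) * hβ' + (b u) * hLeg'
  have ha' : deriv a u = -(ℓ u) * b u := by
    linear_combination (-(deriv a u)) * hunit' + (b u) * hl' + (a u) * hab
  have hb' : deriv b u = ℓ u * a u := by
    linear_combination (-(deriv b u)) * hunit' + (-(a u)) * hl' + (b u) * hab
  -- partial derivatives
  have hru : pderivU r (u, v) = (deriv x u * cos v, deriv x u * sin v, deriv z u) := by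
    have : HasDerivAt (fun t => r (t, v))
        (deriv x u * cos v, deriv x u * sin v, deriv z u) u := by
      have h : HasDerivAt (fun t => (x t * cos v, x t * sin v, z t + lam * v))
          (deriv x u * cos v, deriv x u * sin v, deriv z u) u := by
        refine (hxd.mul_const _).prodMk ((hxd.mul_const _).prodMk ?_)
        simpa using hzd.add_const (lam * v)
      exact h.congr_of_eventuallyEq (by filter_upwards with t; rw [hr])
    exact this.deriv
  have hcos : HasDerivAt cos (-sin v) v := Real.hasDerivAt_cos v
  have hsin : HasDerivAt sin (cos v) v := Real.hasDerivAt_sin v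
  have hrv : pderivV r (u, v) = (-(x u * sin v), x u * cos v, lam) := by
    have : HasDerivAt (fun t => r (u, t)) (-(x u * sin v), x u * cos v, lam) v := by
      have h : HasDerivAt (fun t => (x u * cos t, x u * sin t, z u + lam * t))
          (-(x u * sin v), x u * cos v, lam) v := by
        refine ((hcos.const_mul (x u)).congr_deriv (by ring)).prodMk
          ((hsin.const_mul (x u)).prodMk ?_)
        simpa using ((hasDerivAt_id v).const_mul lam).const_add (z u)
      exact h.congr_of_eventuallyEq (by filter_upwards with t; rw [hr])
    exact this.deriv
  have hν₁u : pderivU ν₁ (u, v) =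
      (deriv a u * cos v, deriv a u * sin v, deriv b u) := by
    have : HasDerivAt (fun t => ν₁ (t, v))
        (deriv a u * cos v, deriv a u * sin v, deriv b u) u := by
      have h : HasDerivAt (fun t => (a t * cos v, a t * sin v, b t))
          (deriv a u * cos v, deriv a u * sin v, deriv b u) u :=
        (had.mul_const _).prodMk ((had.mul_const _).prodMk hbd)
      exact h.congr_of_eventuallyEq (by filter_upwards with t; rw [hν₁])
    exact this.deriv
  have hν₂u : pderivU ν₂ (u, v) = 0 := by
    have : HasDerivAt (fun t => ν₂ (t, v)) 0 u := by
      have h : HasDerivAt (fun _ : ℝ => ((-sin v, cos v, 0) : ℝ × ℝ × ℝ)) 0 u :=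
        hasDerivAt_const _ _
      exact h.congr_of_eventuallyEq (by filter_upwards with t; rw [hν₂])
    exact this.deriv
  have hν₁v : pderivV ν₁ (u, v) = (-(a u * sin v), a u * cos v, 0) := by
    have : HasDerivAt (fun t => ν₁ (u, t)) (-(a u * sin v), a u * cos v, 0) v := by
      have h : HasDerivAt (fun t => (a u * cos t, a u * sin t, b u))
          (-(a u * sin v), a u * cos v, 0) v :=
        ((hcos.const_mul (a u)).congr_deriv (by ring)).prodMk
          ((hsin.const_mul (a u)).prodMk (hasDerivAt_const _ _))
      exact h.congr_of_eventuallyEq (by filter_upwards with t; rw [hν₁])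
    exact this.deriv
  have hν₂v : pderivV ν₂ (u, v) = (-cos v, -sin v, 0) := by
    have : HasDerivAt (fun t => ν₂ (u, t)) (-cos v, -sin v, 0) v := by
      have h : HasDerivAt (fun t => ((-sin t, cos t, 0) : ℝ × ℝ × ℝ))
          (-cos v, -sin v, 0) v :=
        hsin.neg.prodMk (hcos.prodMk (hasDerivAt_const _ _))
      exact h.congr_of_eventuallyEq (by filter_upwards with t; rw [hν₂])
    exact this.deriv
  have hpy : sin v ^ 2 + cos v ^ 2 = 1 := sin_sq_add_cos_sq v
  refine ⟨?_, ?_, ?_, ?_, ?_, ?_, ?_, ?_, ?_, ?_, ?_, ?_⟩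
  · simp only [hν₁, dot3]; linear_combination (a u ^ 2) * hpy + hunit'
  · simp only [hν₂, dot3]; linear_combination hpy
  · simp only [hν₁, hν₂, dot3]; ring
  · simp only [hν₁, hν₂, cross3]
    refine Prod.ext (by ring) (Prod.ext (by ring) ?_)
    simp only; linear_combination (a u) * hpy
  · rw [hru, hx', hz']; simp only [hν₁, hν₂, cross3, Prod.smul_mk, smul_eq_mul]
    refine Prod.ext (by ring) (Prod.ext (by ring) ?_)
    simp only; linear_combination (-(β u * a u)) * hpy
  · rw [hrv]; simp only [hν₁, hν₂, cross3, Prod.smul_mk, smul_eq_mul, Prod.mk_add_mk]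
    refine Prod.ext (by ring) (Prod.ext (by ring) ?_)
    simp only; linear_combination (-(lam * a u ^ 2)) * hpy + (-lam) * hunit'
  · rw [hν₁u, ha', hb']; simp only [hν₁, hν₂, cross3, Prod.smul_mk, smul_eq_mul]
    refine Prod.ext (by ring) (Prod.ext (by ring) ?_)
    simp only; linear_combination (-(ℓ u * a u)) * hpy
  · exact hν₂u
  · rw [hν₁v]; simp only [hν₂, dot3]; linear_combination (a u) * hpy
  · rw [hν₁v]; simp only [hν₁, hν₂, cross3, dot3]; ring
  · rw [hν₂v]; simp only [hν₁, hν₂, cross3, dot3]; linear_combination (b u) * hpy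
  · rw [hru, hrv, hx', hz']
    simp only [hν₁, hν₂, cross3, Prod.smul_mk, smul_eq_mul, Prod.mk_add_mk]
    refine Prod.ext (by ring) (Prod.ext (by ring) ?_)
    simp only; linear_combination (-(β u * b u * x u)) * hpy
end
end

section
/- Let (γ,ν): I → ℝ² × S¹ be a Legendre curve with γ(u) = (x(u), z(u)), ν(u) = (a(u), b(u)) and curvature (ℓ,β), let λ ≠ 0, and let r(u,v) = (x(u)cos v, x(u)sin v, z(u)+λv). Suppose there are C^∞ functions k₁, k₂: I → ℝ with k₁(u)² + k₂(u)² = 1 and -k₁(u)x(u) + λk₂(u)b(u) = 0 for all u ∈ I. Define n(u,v) = (k₂(u)a(u)cos v + k₁(u)sin v, k₂(u)a(u)sin v - k₁(u)cos v, k₂(u)b(u)) and s(u,v) = (-b(u)cos v, -b(u)sin v, a(u)). Then (r,n,s) is a framed surface (|n| = |s| = 1, n·s = 0, r_u·n = 0, r_v·n = 0), and with t = n × s one has r_u = β(u)·s and r_v = λa(u)·s + (-k₂(u)x(u) - λk₁(u)b(u))·t; moreover n_u·s = k₂(u)ℓ(u), n_u·t = k₂(u)k₁'(u) - k₁(u)k₂'(u),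 s_u·t = k₁(u)ℓ(u), n_v·s = -k₁(u)b(u), n_v·t = -a(u), and s_v·t = k₂(u)b(u). -/
noncomputable section

open Real

/-- Under the condition `-k₁ x + λ k₂ b = 0`, the helicoidal surface carries the
framed-surface structure `(r, n, s)`, with the listed basic invariants. -/
theorem helicoidal_framed_surface
    (I : Set ℝ) (hIo : IsOpen I) (hIc : I.OrdConnected)
    (x z a b ℓ β : ℝ → ℝ)
    (hx : ContDiffOn ℝ (⊤ : ℕ∞) x I) (hz : ContDiffOn ℝ (⊤ : ℕ∞) z I)
    (ha : ContDiffOn ℝ (⊤ : ℕ∞) a I) (hb : ContDiffOn ℝ (⊤ : ℕ∞) b I)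
    (hunit : ∀ u ∈ I, a u ^ 2 + b u ^ 2 = 1)
    (hLeg : ∀ u ∈ I, deriv x u * a u + deriv z u * b u = 0)
    (hl : ∀ u ∈ I, ℓ u = -(deriv a u) * b u + deriv b u * a u)
    (hβ : ∀ u ∈ I, β u = -(deriv x u) * b u + deriv z u * a u)
    (lam : ℝ) (hlam : lam ≠ 0)
    (r : ℝ × ℝ → ℝ × ℝ × ℝ)
    (hr : ∀ u v : ℝ, r (u, v) = (x u * cos v, x u * sin v, z u + lam * v))
    (k₁ k₂ : ℝ → ℝ)
    (hk₁ : ContDiffOn ℝ (⊤ : ℕ∞) k₁ I) (hk₂ : ContDiffOn ℝ (⊤ : ℕ∞) k₂ I)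
    (hkunit : ∀ u ∈ I, k₁ u ^ 2 + k₂ u ^ 2 = 1)
    (hkrel : ∀ u ∈ I, -(k₁ u) * x u + lam * k₂ u * b u = 0)
    (n s : ℝ × ℝ → ℝ × ℝ × ℝ)
    (hn : ∀ u v : ℝ, n (u, v) =
      (k₂ u * a u * cos v + k₁ u * sin v,
       k₂ u * a u * sin v - k₁ u * cos v, k₂ u * b u))
    (hs : ∀ u v : ℝ, s (u, v) = (-(b u) * cos v, -(b u) * sin v, a u))
    : ∀ u ∈ I, ∀ v : ℝ,
      dot3 (n (u, v)) (n (u, v)) = 1 ∧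
      dot3 (s (u, v)) (s (u, v)) = 1 ∧
      dot3 (n (u, v)) (s (u, v)) = 0 ∧
      dot3 (pderivU r (u, v)) (n (u, v)) = 0 ∧
      dot3 (pderivV r (u, v)) (n (u, v)) = 0 ∧
      pderivU r (u, v) = β u • s (u, v) ∧
      pderivV r (u, v) =
        (lam * a u) • s (u, v) +
          (-(k₂ u * x u) - lam * k₁ u * b u) • cross3 (n (u, v)) (s (u, v)) ∧
      dot3 (pderivU n (u, v)) (s (u, v)) = k₂ u * ℓ u ∧
      dot3 (pderivU n (u, v)) (cross3 (n (u, v)) (s (u, v))) =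
        k₂ u * deriv k₁ u - k₁ u * deriv k₂ u ∧
      dot3 (pderivU s (u, v)) (cross3 (n (u, v)) (s (u, v))) = k₁ u * ℓ u ∧
      dot3 (pderivV n (u, v)) (s (u, v)) = -(k₁ u) * b u ∧
      dot3 (pderivV n (u, v)) (cross3 (n (u, v)) (s (u, v))) = -(a u) ∧
      dot3 (pderivV s (u, v)) (cross3 (n (u, v)) (s (u, v))) = k₂ u * b u := by
  intro u hu v
  have hmem : I ∈ nhds u := hIo.mem_nhds hu
  have hxD : HasDerivAt x (deriv x u) u :=
    ((hx.contDiffAt hmem).differentiableAt (by simp)).hasDerivAt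
  have hzD : HasDerivAt z (deriv z u) u :=
    ((hz.contDiffAt hmem).differentiableAt (by simp)).hasDerivAt
  have haD : HasDerivAt a (deriv a u) u :=
    ((ha.contDiffAt hmem).differentiableAt (by simp)).hasDerivAt
  have hbD : HasDerivAt b (deriv b u) u :=
    ((hb.contDiffAt hmem).differentiableAt (by simp)).hasDerivAt
  have hk₁D : HasDerivAt k₁ (deriv k₁ u) u :=
    ((hk₁.contDiffAt hmem).differentiableAt (by simp)).hasDerivAt
  have hk₂D : HasDerivAt k₂ (deriv k₂ u) u :=
    ((hk₂.contDiffAt hmem).differentiableAt (by simp)).hasDerivAt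
  have hA := hunit u hu
  have hK := hkunit u hu
  have hL := hLeg u hu
  have hR := hkrel u hu
  have P := sin_sq_add_cos_sq v
  -- derivative of a² + b² = 1
  have hD : a u * deriv a u + b u * deriv b u = 0 := by
    have h1 : HasDerivAt (fun t => a t ^ 2 + b t ^ 2)
        (2 * a u * deriv a u + 2 * b u * deriv b u) u := by
      have := (haD.fun_pow 2).fun_add (hbD.fun_pow 2)
      simpa [pow_one] using this
    have hev : (fun t => a t ^ 2 + b t ^ 2) =ᶠ[nhds u] fun _ => (1 : ℝ) := by
      filter_upwards [hmem] with t ht using hunit t ht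
    have h2 : deriv (fun t => a t ^ 2 + b t ^ 2) u = 0 := by
      rw [hev.deriv_eq]; exact deriv_const u 1
    have h3 := h1.deriv
    rw [h2] at h3
    linarith
  have hE : k₁ u * deriv k₁ u + k₂ u * deriv k₂ u = 0 := by
    have h1 : HasDerivAt (fun t => k₁ t ^ 2 + k₂ t ^ 2)
        (2 * k₁ u * deriv k₁ u + 2 * k₂ u * deriv k₂ u) u := by
      have := (hk₁D.fun_pow 2).fun_add (hk₂D.fun_pow 2)
      simpa [pow_one] using this
    have hev : (fun t => k₁ t ^ 2 + k₂ t ^ 2) =ᶠ[nhds u] fun _ => (1 : ℝ) := by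
      filter_upwards [hmem] with t ht using hkunit t ht
    have h2 : deriv (fun t => k₁ t ^ 2 + k₂ t ^ 2) u = 0 := by
      rw [hev.deriv_eq]; exact deriv_const u 1
    have h3 := h1.deriv
    rw [h2] at h3
    linarith
  -- partial derivatives
  have hru : pderivU r (u, v) = (deriv x u * cos v, deriv x u * sin v, deriv z u) := by
    have h : (fun t => r (t, v)) = fun t => (x t * cos v, x t * sin v, z t + lam * v) :=
      funext fun t => hr t v
    show deriv (fun t => r (t, v)) u = _
    rw [h]
    exact ((hxD.mul_const _).prodMk ((hxD.mul_const _).prodMk (hzD.add_const _))).deriv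
  have hrv : pderivV r (u, v) = (x u * -sin v, x u * cos v, lam) := by
    have h : (fun t => r (u, t)) = fun t => (x u * cos t, x u * sin t, z u + lam * t) :=
      funext fun t => hr u t
    show deriv (fun t => r (u, t)) v = _
    rw [h]
    have h3 : HasDerivAt (fun t : ℝ => z u + lam * t) lam v := by
      simpa using ((hasDerivAt_id v).const_mul lam).const_add (z u)
    exact (((hasDerivAt_cos v).const_mul (x u)).prodMk
      (((hasDerivAt_sin v).const_mul (x u)).prodMk h3)).deriv
  have hnu : pderivU n (u, v) =
      ((deriv k₂ u * a u + k₂ u * deriv a u) * cos v + deriv k₁ u * sin v,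
       (deriv k₂ u * a u + k₂ u * deriv a u) * sin v - deriv k₁ u * cos v,
       deriv k₂ u * b u + k₂ u * deriv b u) := by
    have h : (fun t => n (t, v)) = fun t =>
        (k₂ t * a t * cos v + k₁ t * sin v,
         k₂ t * a t * sin v - k₁ t * cos v, k₂ t * b t) := funext fun t => hn t v
    show deriv (fun t => n (t, v)) u = _
    rw [h]
    exact ((((hk₂D.mul haD).mul_const _).add (hk₁D.mul_const _)).prodMk
      (((((hk₂D.mul haD).mul_const _).sub (hk₁D.mul_const _))).prodMk
        (hk₂D.mul hbD))).deriv
  have hnv : pderivV n (u, v) =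
      (k₂ u * a u * -sin v + k₁ u * cos v,
       k₂ u * a u * cos v - k₁ u * -sin v, 0) := by
    have h : (fun t => n (u, t)) = fun t =>
        (k₂ u * a u * cos t + k₁ u * sin t,
         k₂ u * a u * sin t - k₁ u * cos t, k₂ u * b u) := funext fun t => hn u t
    show deriv (fun t => n (u, t)) v = _
    rw [h]
    exact ((((hasDerivAt_cos v).const_mul _).add ((hasDerivAt_sin v).const_mul _)).prodMk
      ((((hasDerivAt_sin v).const_mul _).sub ((hasDerivAt_cos v).const_mul _)).prodMk
        (hasDerivAt_const v _))).deriv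
  have hsu : pderivU s (u, v) =
      (-(deriv b u) * cos v, -(deriv b u) * sin v, deriv a u) := by
    have h : (fun t => s (t, v)) = fun t =>
        (-(b t) * cos v, -(b t) * sin v, a t) := funext fun t => hs t v
    show deriv (fun t => s (t, v)) u = _
    rw [h]
    exact ((hbD.neg.mul_const _).prodMk ((hbD.neg.mul_const _).prodMk haD)).deriv
  have hsv : pderivV s (u, v) =
      (-(b u) * -sin v, -(b u) * cos v, 0) := by
    have h : (fun t => s (u, t)) = fun t =>
        (-(b u) * cos t, -(b u) * sin t, a u) := funext fun t => hs u t
    show deriv (fun t => s (u, t)) v = _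
    rw [h]
    exact (((hasDerivAt_cos v).const_mul _).prodMk
      (((hasDerivAt_sin v).const_mul _).prodMk (hasDerivAt_const v _))).deriv
  refine ⟨?_, ?_, ?_, ?_, ?_, ?_, ?_, ?_, ?_, ?_, ?_, ?_, ?_⟩
  · rw [hn u v]; simp only [dot3]
    linear_combination (k₂ u ^ 2 * a u ^ 2 + k₁ u ^ 2) * P + k₂ u ^ 2 * hA + hK
  · rw [hs u v]; simp only [dot3]
    linear_combination b u ^ 2 * P + hA
  · rw [hn u v, hs u v]; simp only [dot3]
    linear_combination (-(k₂ u * a u * b u)) * P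
  · rw [hru, hn u v]; simp only [dot3]
    linear_combination k₂ u * a u * deriv x u * P + k₂ u * hL
  · rw [hrv, hn u v]; simp only [dot3]
    linear_combination (-(k₁ u * x u)) * P + hR
  · rw [hru, hβ u hu, hs u v]
    simp only [Prod.smul_mk, smul_eq_mul, Prod.mk.injEq]
    refine ⟨?_, ?_, ?_⟩
    · linear_combination a u * cos v * hL + (-(deriv x u * cos v)) * hA
    · linear_combination a u * sin v * hL + (-(deriv x u * sin v)) * hA
    · linear_combination b u * hL + (-(deriv z u)) * hA
  · rw [hrv, hn u v, hs u v]
    simp only [cross3, Prod.smul_mk, smul_eq_mul, Prod.mk_add_mk, Prod.mk.injEq]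
    refine ⟨?_, ?_, ?_⟩
    · linear_combination (x u * sin v - lam * a u * b u * cos v) * hK +
        (k₁ u * sin v + k₂ u * a u * cos v) * hR +
        (-((-(k₂ u * x u) - lam * k₁ u * b u) * k₂ u * sin v)) * hA
    · linear_combination (-(x u * cos v) - lam * a u * b u * sin v) * hK +
        (k₂ u * a u * sin v - k₁ u * cos v) * hR +
        ((-(k₂ u * x u) - lam * k₁ u * b u) * k₂ u * cos v) * hA
    · linear_combination (-lam) * hA + (-(lam * b u ^ 2)) * hK + (k₂ u * b u) * hR +
        ((-(k₂ u * x u) - lam * k₁ u * b u) * k₁ u * b u) * P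
  · rw [hnu, hs u v, hl u hu]; simp only [dot3]
    linear_combination (-((deriv k₂ u * a u + k₂ u * deriv a u) * b u)) * P
  · rw [hnu, hn u v, hs u v]; simp only [dot3, cross3]
    linear_combination (deriv k₁ u * k₂ u - deriv k₂ u * k₁ u) * hA +
      (-((deriv k₂ u * a u + k₂ u * deriv a u) * k₁ u * a u) +
        deriv k₁ u * k₂ u * (a u ^ 2 + b u ^ 2) -
        (deriv k₂ u * b u + k₂ u * deriv b u) * k₁ u * b u) * P +
      (-(k₁ u * k₂ u)) * hD
  · rw [hsu, hn u v, hs u v, hl u hu]; simp only [dot3, cross3]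
    linear_combination ((deriv b u * a u - deriv a u * b u) * k₁ u) * P
  · rw [hnv, hs u v]; simp only [dot3]
    linear_combination (-(k₁ u * b u)) * P
  · rw [hnv, hn u v, hs u v]; simp only [dot3, cross3]
    linear_combination (-(a u)) * hK + (-(k₂ u ^ 2 * a u)) * hA +
      (-(k₂ u ^ 2 * a u * (a u ^ 2 + b u ^ 2) + k₁ u ^ 2 * a u)) * P
  · rw [hsv, hn u v, hs u v]; simp only [dot3, cross3]
    linear_combination (k₂ u * b u) * hA + (k₂ u * b u * (a u ^ 2 + b u ^ 2)) * P
end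
end

section
/- Let (γ,ν): I → ℝ² × S¹ be a Legendre curve with γ(u) = (x(u), z(u)), ν(u) = (a(u), b(u)), let λ ≠ 0, and let r(u,v) = (x(u)cos v, x(u)sin v, z(u)+λv). Suppose (x(u), b(u)) ≠ (0,0) for all u ∈ I. Then the functions k₁(u) = λb(u)/√(x(u)² + λ²b(u)²) and k₂(u) = x(u)/√(x(u)² + λ²b(u)²) are C^∞ and satisfy k₁² + k₂² = 1 and -k₁x + λk₂b = 0 on I; consequently r is a framed base surface, i.e., there exists a C^∞ map (n,s): I×ℝ → Δ such that r_u·n = 0 and r_v·n = 0 everywhere. -/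
noncomputable section

open Real

/-- If `(x(u), b(u)) ≠ (0, 0)` on `I`, the canonical choice of `(k₁, k₂)` is
smooth and satisfies the required relations; consequently the helicoidal
surface is a framed base surface. -/
theorem helicoidal_framed_base_surface
    (I : Set ℝ) (hIo : IsOpen I) (hIc : I.OrdConnected)
    (x z a b : ℝ → ℝ)
    (hx : ContDiffOn ℝ (⊤ : ℕ∞) x I) (hz : ContDiffOn ℝ (⊤ : ℕ∞) z I)
    (ha : ContDiffOn ℝ (⊤ : ℕ∞) a I) (hb : ContDiffOn ℝ (⊤ : ℕ∞) b I)
    (hunit : ∀ u ∈ I, a u ^ 2 + b u ^ 2 = 1)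
    (hLeg : ∀ u ∈ I, deriv x u * a u + deriv z u * b u = 0)
    (lam : ℝ) (hlam : lam ≠ 0)
    (r : ℝ × ℝ → ℝ × ℝ × ℝ)
    (hr : ∀ u v : ℝ, r (u, v) = (x u * cos v, x u * sin v, z u + lam * v))
    (hxb : ∀ u ∈ I, (x u, b u) ≠ (0, 0))
    (k₁ k₂ : ℝ → ℝ)
    (hk₁ : ∀ u : ℝ, k₁ u = lam * b u / Real.sqrt (x u ^ 2 + lam ^ 2 * b u ^ 2))
    (hk₂ : ∀ u : ℝ, k₂ u = x u / Real.sqrt (x u ^ 2 + lam ^ 2 * b u ^ 2)) :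
    ContDiffOn ℝ (⊤ : ℕ∞) k₁ I ∧ ContDiffOn ℝ (⊤ : ℕ∞) k₂ I ∧
    (∀ u ∈ I, k₁ u ^ 2 + k₂ u ^ 2 = 1) ∧
    (∀ u ∈ I, -(k₁ u) * x u + lam * k₂ u * b u = 0) ∧
    ∃ n s : ℝ × ℝ → ℝ × ℝ × ℝ,
      ContDiffOn ℝ (⊤ : ℕ∞) n (I ×ˢ (Set.univ : Set ℝ)) ∧
      ContDiffOn ℝ (⊤ : ℕ∞) s (I ×ˢ (Set.univ : Set ℝ)) ∧
      ∀ u ∈ I, ∀ v : ℝ,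
        dot3 (n (u, v)) (n (u, v)) = 1 ∧
        dot3 (s (u, v)) (s (u, v)) = 1 ∧
        dot3 (n (u, v)) (s (u, v)) = 0 ∧
        dot3 (pderivU r (u, v)) (n (u, v)) = 0 ∧
        dot3 (pderivV r (u, v)) (n (u, v)) = 0 := by
  have hDpos : ∀ u ∈ I, 0 < x u ^ 2 + lam ^ 2 * b u ^ 2 := by
    intro u hu
    rcases lt_or_eq_of_le (by positivity : (0:ℝ) ≤ x u ^ 2 + lam ^ 2 * b u ^ 2) with h | h
    · exact h
    · exfalso
      have hx0 : x u = 0 := by nlinarith [sq_nonneg (x u), sq_nonneg (lam * b u)]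
      have hb0 : b u = 0 := by
        have : lam ^ 2 * b u ^ 2 = 0 := by nlinarith [sq_nonneg (x u)]
        have := mul_eq_zero.1 this
        rcases this with h' | h'
        · exact absurd (pow_eq_zero_iff (by norm_num) |>.1 h') hlam
        · exact pow_eq_zero_iff (by norm_num) |>.1 h'
      exact hxb u hu (by simp [hx0, hb0])
  have hSpos : ∀ u ∈ I, 0 < Real.sqrt (x u ^ 2 + lam ^ 2 * b u ^ 2) := fun u hu =>
    Real.sqrt_pos.2 (hDpos u hu)
  have hSsq : ∀ u ∈ I, Real.sqrt (x u ^ 2 + lam ^ 2 * b u ^ 2) ^ 2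
      = x u ^ 2 + lam ^ 2 * b u ^ 2 := fun u hu => Real.sq_sqrt (hDpos u hu).le
  have hD : ContDiffOn ℝ (⊤ : ℕ∞) (fun u => x u ^ 2 + lam ^ 2 * b u ^ 2) I :=
    (hx.pow 2).add (contDiffOn_const.mul (hb.pow 2))
  have hS : ContDiffOn ℝ (⊤ : ℕ∞) (fun u => Real.sqrt (x u ^ 2 + lam ^ 2 * b u ^ 2)) I :=
    hD.sqrt (fun u hu => (hDpos u hu).ne')
  have hk1s : ContDiffOn ℝ (⊤ : ℕ∞) k₁ I := by
    have : ContDiffOn ℝ (⊤ : ℕ∞) (fun u => lam * b u / Real.sqrt (x u ^ 2 + lam ^ 2 * b u ^ 2)) I :=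
      (contDiffOn_const.mul hb).div hS (fun u hu => (hSpos u hu).ne')
    exact this.congr (fun u _ => hk₁ u)
  have hk2s : ContDiffOn ℝ (⊤ : ℕ∞) k₂ I := by
    have : ContDiffOn ℝ (⊤ : ℕ∞) (fun u => x u / Real.sqrt (x u ^ 2 + lam ^ 2 * b u ^ 2)) I :=
      hx.div hS (fun u hu => (hSpos u hu).ne')
    exact this.congr (fun u _ => hk₂ u)
  have hsum : ∀ u ∈ I, k₁ u ^ 2 + k₂ u ^ 2 = 1 := by
    intro u hu
    rw [hk₁, hk₂, div_pow, div_pow, ← add_div, hSsq u hu]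
    rw [div_eq_one_iff_eq (hDpos u hu).ne']
    ring
  have hrel : ∀ u ∈ I, -(k₁ u) * x u + lam * k₂ u * b u = 0 := by
    intro u hu
    rw [hk₁, hk₂]
    ring
  refine ⟨hk1s, hk2s, hsum, hrel, ?_⟩
  refine ⟨fun p => (k₂ p.1 * a p.1 * Real.cos p.2 + k₁ p.1 * Real.sin p.2,
                    k₂ p.1 * a p.1 * Real.sin p.2 - k₁ p.1 * Real.cos p.2,
                    k₂ p.1 * b p.1),
          fun p => (k₁ p.1 * a p.1 * Real.cos p.2 - k₂ p.1 * Real.sin p.2,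
                    k₁ p.1 * a p.1 * Real.sin p.2 + k₂ p.1 * Real.cos p.2,
                    k₁ p.1 * b p.1), ?_, ?_, ?_⟩
  · -- smoothness of n
    have hmaps : ∀ p ∈ I ×ˢ (Set.univ : Set ℝ), (p : ℝ × ℝ).1 ∈ I := fun p hp => hp.1
    have hk1' : ContDiffOn ℝ (⊤ : ℕ∞) (fun p : ℝ × ℝ => k₁ p.1) (I ×ˢ Set.univ) :=
      hk1s.comp contDiff_fst.contDiffOn hmaps
    have hk2' : ContDiffOn ℝ (⊤ : ℕ∞) (fun p : ℝ × ℝ => k₂ p.1) (I ×ˢ Set.univ) :=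
      hk2s.comp contDiff_fst.contDiffOn hmaps
    have ha' : ContDiffOn ℝ (⊤ : ℕ∞) (fun p : ℝ × ℝ => a p.1) (I ×ˢ Set.univ) :=
      ha.comp contDiff_fst.contDiffOn hmaps
    have hb' : ContDiffOn ℝ (⊤ : ℕ∞) (fun p : ℝ × ℝ => b p.1) (I ×ˢ Set.univ) :=
      hb.comp contDiff_fst.contDiffOn hmaps
    have hc : ContDiffOn ℝ (⊤ : ℕ∞) (fun p : ℝ × ℝ => Real.cos p.2) (I ×ˢ Set.univ) :=
      (Real.contDiff_cos.comp contDiff_snd).contDiffOn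
    have hsn : ContDiffOn ℝ (⊤ : ℕ∞) (fun p : ℝ × ℝ => Real.sin p.2) (I ×ˢ Set.univ) :=
      (Real.contDiff_sin.comp contDiff_snd).contDiffOn
    exact (((hk2'.mul ha').mul hc).add (hk1'.mul hsn)).prodMk
      ((((hk2'.mul ha').mul hsn).sub (hk1'.mul hc)).prodMk (hk2'.mul hb'))
  · -- smoothness of s
    have hmaps : ∀ p ∈ I ×ˢ (Set.univ : Set ℝ), (p : ℝ × ℝ).1 ∈ I := fun p hp => hp.1
    have hk1' : ContDiffOn ℝ (⊤ : ℕ∞) (fun p : ℝ × ℝ => k₁ p.1) (I ×ˢ Set.univ) :=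
      hk1s.comp contDiff_fst.contDiffOn hmaps
    have hk2' : ContDiffOn ℝ (⊤ : ℕ∞) (fun p : ℝ × ℝ => k₂ p.1) (I ×ˢ Set.univ) :=
      hk2s.comp contDiff_fst.contDiffOn hmaps
    have ha' : ContDiffOn ℝ (⊤ : ℕ∞) (fun p : ℝ × ℝ => a p.1) (I ×ˢ Set.univ) :=
      ha.comp contDiff_fst.contDiffOn hmaps
    have hb' : ContDiffOn ℝ (⊤ : ℕ∞) (fun p : ℝ × ℝ => b p.1) (I ×ˢ Set.univ) :=
      hb.comp contDiff_fst.contDiffOn hmaps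
    have hc : ContDiffOn ℝ (⊤ : ℕ∞) (fun p : ℝ × ℝ => Real.cos p.2) (I ×ˢ Set.univ) :=
      (Real.contDiff_cos.comp contDiff_snd).contDiffOn
    have hsn : ContDiffOn ℝ (⊤ : ℕ∞) (fun p : ℝ × ℝ => Real.sin p.2) (I ×ˢ Set.univ) :=
      (Real.contDiff_sin.comp contDiff_snd).contDiffOn
    exact (((hk1'.mul ha').mul hc).sub (hk2'.mul hsn)).prodMk
      ((((hk1'.mul ha').mul hsn).add (hk2'.mul hc)).prodMk (hk1'.mul hb'))
  · intro u hu v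
    have hP : Real.sin v ^ 2 + Real.cos v ^ 2 = 1 := Real.sin_sq_add_cos_sq v
    have hab := hunit u hu
    have hkk := hsum u hu
    have hre := hrel u hu
    have hL := hLeg u hu
    -- partial derivatives
    have hxd : DifferentiableAt ℝ x u :=
      (hx.contDiffAt (hIo.mem_nhds hu)).differentiableAt (by simp)
    have hzd : DifferentiableAt ℝ z u :=
      (hz.contDiffAt (hIo.mem_nhds hu)).differentiableAt (by simp)
    have hru : pderivU r (u, v) = (deriv x u * Real.cos v, deriv x u * Real.sin v, deriv z u) := by
      have he : (fun u' => r (u', v))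
          = fun u' => (x u' * Real.cos v, x u' * Real.sin v, z u' + lam * v) :=
        funext fun u' => hr u' v
      have hd : HasDerivAt (fun u' => (x u' * Real.cos v, x u' * Real.sin v, z u' + lam * v))
          (deriv x u * Real.cos v, deriv x u * Real.sin v, deriv z u) u := by
        exact ((hxd.hasDerivAt.mul_const _).prodMk
          ((hxd.hasDerivAt.mul_const _).prodMk (hzd.hasDerivAt.add_const _)))
      simp only [pderivU, he]
      exact hd.deriv
    have hrv : pderivV r (u, v) = (-(x u * Real.sin v), x u * Real.cos v, lam) := by
      have he : (fun v' => r (u, v'))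
          = fun v' => (x u * Real.cos v', x u * Real.sin v', z u + lam * v') :=
        funext fun v' => hr u v'
      have hd : HasDerivAt (fun v' => (x u * Real.cos v', x u * Real.sin v', z u + lam * v'))
          (-(x u * Real.sin v), x u * Real.cos v, lam) v := by
        have h1 : HasDerivAt (fun v' => x u * Real.cos v') (x u * (-Real.sin v)) v :=
          (Real.hasDerivAt_cos v).const_mul (x u)
        have h2 : HasDerivAt (fun v' => x u * Real.sin v') (x u * Real.cos v) v :=
          (Real.hasDerivAt_sin v).const_mul (x u)
        have h3 : HasDerivAt (fun v' => z u + lam * v') lam v := by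
          simpa using ((hasDerivAt_id v).const_mul lam).const_add (z u)
        have := h1.prodMk (h2.prodMk h3)
        simpa [mul_comm] using this
      simp only [pderivV, he]
      exact hd.deriv
    refine ⟨?_, ?_, ?_, ?_, ?_⟩
    · simp only [dot3]
      linear_combination (k₂ u ^ 2 * a u ^ 2 + k₁ u ^ 2) * hP + k₂ u ^ 2 * hab + hkk
    · simp only [dot3]
      linear_combination (k₁ u ^ 2 * a u ^ 2 + k₂ u ^ 2) * hP + k₁ u ^ 2 * hab + hkk
    · simp only [dot3]
      linear_combination (k₂ u * k₁ u * a u ^ 2 - k₂ u * k₁ u) * hP + k₂ u * k₁ u * hab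
    · rw [hru]; simp only [dot3]; linear_combination deriv x u * k₂ u * a u * hP + k₂ u * hL
    · rw [hrv]; simp only [dot3]; linear_combination (-(x u * k₁ u)) * hP + hre
end
end

section
/- Let (γ,ν): I → ℝ² × S¹ be a Legendre curve with γ(u) = (x(u), z(u)), ν(u) = (a(u), b(u)) and curvature (ℓ,β), let λ ≠ 0, and define the slice curve s(u) = (x(u)cos(z(u)/λ), -x(u)sin(z(u)/λ)). Suppose there are C^∞ functions ℓ₁, ℓ₂: I → ℝ with ℓ₁(u)² + ℓ₂(u)² = 1 and λℓ₁(u)b(u) + ℓ₂(u)x(u)a(u) = 0 for all u ∈ I, and define ν^s(u) = (-ℓ₂(u)sin(z(u)/λ) - ℓ₁(u)cos(z(u)/λ), -ℓ₂(u)cos(z(u)/λ) + ℓ₁(u)sin(z(u)/λ)). Then (s, ν^s) is a Legendre curve (|ν^s| = 1 and s'(u)·ν^s(u) = 0 for all u), and its curvature (ℓ^s, β^s) is given by ℓ^s(u) = -a(u)β(u)/λ + ℓ₁(u)ℓ₂'(u) - ℓ₁'(u)ℓ₂(u) and β^s(u) = (ℓ₁(u)x(u)a(u)/λ - ℓ₂(u)b(u))β(u).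 -/
noncomputable section

open Real

/-- The slice curve of the helicoidal surface is a frontal, with the stated
curvature of the associated Legendre curve. -/
theorem slice_curve_is_frontal
    (I : Set ℝ) (hIo : IsOpen I) (hIc : I.OrdConnected)
    (x z a b ℓ β : ℝ → ℝ)
    (hx : ContDiffOn ℝ (⊤ : ℕ∞) x I) (hz : ContDiffOn ℝ (⊤ : ℕ∞) z I)
    (ha : ContDiffOn ℝ (⊤ : ℕ∞) a I) (hb : ContDiffOn ℝ (⊤ : ℕ∞) b I)
    (hunit : ∀ u ∈ I, a u ^ 2 + b u ^ 2 = 1)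
    (hLeg : ∀ u ∈ I, deriv x u * a u + deriv z u * b u = 0)
    (hl : ∀ u ∈ I, ℓ u = -(deriv a u) * b u + deriv b u * a u)
    (hβ : ∀ u ∈ I, β u = -(deriv x u) * b u + deriv z u * a u)
    (lam : ℝ) (hlam : lam ≠ 0)
    (s : ℝ → ℝ × ℝ)
    (hsc : ∀ u : ℝ, s u = (x u * cos (z u / lam), -(x u * sin (z u / lam))))
    (ℓ₁ ℓ₂ : ℝ → ℝ)
    (hℓ₁ : ContDiffOn ℝ (⊤ : ℕ∞) ℓ₁ I) (hℓ₂ : ContDiffOn ℝ (⊤ : ℕ∞) ℓ₂ I)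
    (hℓunit : ∀ u ∈ I, ℓ₁ u ^ 2 + ℓ₂ u ^ 2 = 1)
    (hℓrel : ∀ u ∈ I, lam * ℓ₁ u * b u + ℓ₂ u * x u * a u = 0)
    (νs : ℝ → ℝ × ℝ)
    (hνs : ∀ u : ℝ, νs u =
      (-(ℓ₂ u) * sin (z u / lam) - ℓ₁ u * cos (z u / lam),
       -(ℓ₂ u) * cos (z u / lam) + ℓ₁ u * sin (z u / lam))) :
    ∀ u ∈ I,
      (νs u).1 ^ 2 + (νs u).2 ^ 2 = 1 ∧
      (deriv s u).1 * (νs u).1 + (deriv s u).2 * (νs u).2 = 0 ∧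
      -(deriv νs u).1 * (νs u).2 + (deriv νs u).2 * (νs u).1 =
        -(a u) * β u / lam + ℓ₁ u * deriv ℓ₂ u - deriv ℓ₁ u * ℓ₂ u ∧
      -(deriv s u).1 * (νs u).2 + (deriv s u).2 * (νs u).1 =
        (ℓ₁ u * x u * a u / lam - ℓ₂ u * b u) * β u := by

  intro u hu
  have hmem : I ∈ nhds u := hIo.mem_nhds hu
  -- differentiability of the basic functions at u
  have hdx : HasDerivAt x (deriv x u) u :=
    (((hx.contDiffAt hmem).differentiableAt (by simp))).hasDerivAt
  have hdz : HasDerivAt z (deriv z u) u :=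
    (((hz.contDiffAt hmem).differentiableAt (by simp))).hasDerivAt
  have hdl1 : HasDerivAt ℓ₁ (deriv ℓ₁ u) u :=
    (((hℓ₁.contDiffAt hmem).differentiableAt (by simp))).hasDerivAt
  have hdl2 : HasDerivAt ℓ₂ (deriv ℓ₂ u) u :=
    (((hℓ₂.contDiffAt hmem).differentiableAt (by simp))).hasDerivAt
  -- derivative of the angle θ = z/lam
  have hθ : HasDerivAt (fun t => z t / lam) (deriv z u / lam) u := hdz.div_const lam
  have hcos : HasDerivAt (fun t => Real.cos (z t / lam))
      (-Real.sin (z u / lam) * (deriv z u / lam)) u := hθ.cos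
  have hsin : HasDerivAt (fun t => Real.sin (z t / lam))
      (Real.cos (z u / lam) * (deriv z u / lam)) u := hθ.sin
  -- derivative of s
  have hs1 : HasDerivAt (fun t => x t * Real.cos (z t / lam))
      (deriv x u * Real.cos (z u / lam) + x u * (-Real.sin (z u / lam) * (deriv z u / lam))) u :=
    hdx.mul hcos
  have hs2 : HasDerivAt (fun t => -(x t * Real.sin (z t / lam)))
      (-(deriv x u * Real.sin (z u / lam) + x u * (Real.cos (z u / lam) * (deriv z u / lam)))) u :=
    (hdx.mul hsin).neg
  have hseq : s = fun t => (x t * Real.cos (z t / lam), -(x t * Real.sin (z t / lam))) :=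
    funext hsc
  have hds : deriv s u =
      (deriv x u * Real.cos (z u / lam) + x u * (-Real.sin (z u / lam) * (deriv z u / lam)),
       -(deriv x u * Real.sin (z u / lam) + x u * (Real.cos (z u / lam) * (deriv z u / lam)))) := by
    rw [hseq]
    exact (hs1.prodMk hs2).deriv
  -- derivative of νs
  have hn1 : HasDerivAt (fun t => -(ℓ₂ t) * Real.sin (z t / lam) - ℓ₁ t * Real.cos (z t / lam))
      ((-(deriv ℓ₂ u) * Real.sin (z u / lam) +
          -(ℓ₂ u) * (Real.cos (z u / lam) * (deriv z u / lam))) -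
        (deriv ℓ₁ u * Real.cos (z u / lam) +
          ℓ₁ u * (-Real.sin (z u / lam) * (deriv z u / lam)))) u :=
    (hdl2.neg.mul hsin).sub (hdl1.mul hcos)
  have hn2 : HasDerivAt (fun t => -(ℓ₂ t) * Real.cos (z t / lam) + ℓ₁ t * Real.sin (z t / lam))
      ((-(deriv ℓ₂ u) * Real.cos (z u / lam) +
          -(ℓ₂ u) * (-Real.sin (z u / lam) * (deriv z u / lam))) +
        (deriv ℓ₁ u * Real.sin (z u / lam) +
          ℓ₁ u * (Real.cos (z u / lam) * (deriv z u / lam)))) u :=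
    (hdl2.neg.mul hcos).add (hdl1.mul hsin)
  have hνeq : νs = fun t => (-(ℓ₂ t) * Real.sin (z t / lam) - ℓ₁ t * Real.cos (z t / lam),
      -(ℓ₂ t) * Real.cos (z t / lam) + ℓ₁ t * Real.sin (z t / lam)) := funext hνs
  have hdν : deriv νs u =
      ((-(deriv ℓ₂ u) * Real.sin (z u / lam) +
          -(ℓ₂ u) * (Real.cos (z u / lam) * (deriv z u / lam))) -
        (deriv ℓ₁ u * Real.cos (z u / lam) +
          ℓ₁ u * (-Real.sin (z u / lam) * (deriv z u / lam))),
       (-(deriv ℓ₂ u) * Real.cos (z u / lam) +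
          -(ℓ₂ u) * (-Real.sin (z u / lam) * (deriv z u / lam))) +
        (deriv ℓ₁ u * Real.sin (z u / lam) +
          ℓ₁ u * (Real.cos (z u / lam) * (deriv z u / lam)))) := by
    rw [hνeq]
    exact (hn1.prodMk hn2).deriv
  -- basic relations
  have E2 := hunit u hu
  have E3 := hℓrel u hu
  have E4 : Real.sin (z u / lam) ^ 2 + Real.cos (z u / lam) ^ 2 = 1 :=
    Real.sin_sq_add_cos_sq _
  have E5 := hℓunit u hu
  have hx' : deriv x u = -(b u) * β u := by
    linear_combination a u * hLeg u hu + b u * hβ u hu - deriv x u * hunit u hu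
  have hz' : deriv z u = a u * β u := by
    linear_combination b u * hLeg u hu - a u * hβ u hu - deriv z u * hunit u hu
  refine ⟨?_, ?_, ?_, ?_⟩
  · rw [hνs u]
    linear_combination (ℓ₁ u ^ 2 + ℓ₂ u ^ 2) * E4 + E5
  · rw [hds, hνs u, hx', hz']
    have hinv : lam * lam⁻¹ = 1 := mul_inv_cancel₀ hlam
    linear_combination (β u / lam) * E3 +
      (b u * β u * ℓ₁ u + x u * a u * β u * ℓ₂ u / lam) * E4 +
      (-(b u * β u * ℓ₁ u)) * hinv
  · rw [hdν, hνs u, hz']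
    linear_combination
      (ℓ₁ u * deriv ℓ₂ u - deriv ℓ₁ u * ℓ₂ u -
        (ℓ₁ u ^ 2 + ℓ₂ u ^ 2) * (a u * β u / lam)) * E4 -
      (a u * β u / lam) * E5
  · rw [hds, hνs u, hx', hz']
    linear_combination (-(b u) * β u * ℓ₂ u + x u * ℓ₁ u * a u * β u / lam) * E4
end
end

section
/- Let (γ,ν): I → ℝ² × S¹ be a Legendre curve with γ(u) = (x(u), z(u)), ν(u) = (a(u), b(u)) and curvature (ℓ,β), let λ ≠ 0, and let r[γ](u,v) = (x(u)cos v, x(u)sin v, z(u)+λv). Assume: (a) there are C^∞ functions k₁,k₂ with k₁²+k₂² = 1 and -k₁x + λk₂b = 0, giving the framed surface (r[γ],n,s) with unit normal n(u,v) = (k₂a cos v + k₁ sin v, k₂a sin v - k₁ cos v, k₂b), and let r[γ]^t̃ = r[γ] + t̃·n be a parallel surface for a fixed t̃ ≠ 0; (b) there are C^∞ functions A, θ: I → ℝ with x + t̃k₂a = A cos θ and t̃k₁ = A sin θ; (c) there are C^∞ functions ℓ₁,ℓ₂ with ℓ₁²+ℓ₂² = 1 and λℓ₁b + ℓ₂xa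 = 0, giving the Legendre slice curve with normal ν^s, a fixed t ≠ 0, and C^∞ functions B, τ: I → ℝ with x - tℓ₁ = B cos τ and -tℓ₂ = B sin τ; set γ̃(u) = (B(u), z(u) - λτ(u)) and r[γ̃](u,v) = (B(u)cos v, B(u)sin v, z(u) - λτ(u) + λv). If r[γ]^t̃(u,v) = r[γ̃](u,v) for all (u,v) ∈ I×ℝ, then x is constant on I and ℓ ≡ 0 on I, i.e., γ is a part of a line. -/
noncomputable section

open Real

/-- If a parallel surface of the helicoidal surface coincides with the
helicoidal surface of a parallel curve of the slice curve, then `x` is constant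
and `γ` is a part of a line (`ℓ ≡ 0`). -/
theorem parallel_helicoidal_coincide_implies_line
    (I : Set ℝ) (hIo : IsOpen I) (hIc : I.OrdConnected)
    (x z a b ℓ β : ℝ → ℝ)
    (hx : ContDiffOn ℝ (⊤ : ℕ∞) x I) (hz : ContDiffOn ℝ (⊤ : ℕ∞) z I)
    (ha : ContDiffOn ℝ (⊤ : ℕ∞) a I) (hb : ContDiffOn ℝ (⊤ : ℕ∞) b I)
    (hunit : ∀ u ∈ I, a u ^ 2 + b u ^ 2 = 1)
    (hLeg : ∀ u ∈ I, deriv x u * a u + deriv z u * b u = 0)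
    (hl : ∀ u ∈ I, ℓ u = -(deriv a u) * b u + deriv b u * a u)
    (hβ : ∀ u ∈ I, β u = -(deriv x u) * b u + deriv z u * a u)
    (lam : ℝ) (hlam : lam ≠ 0)
    (k₁ k₂ : ℝ → ℝ)
    (hk₁ : ContDiffOn ℝ (⊤ : ℕ∞) k₁ I) (hk₂ : ContDiffOn ℝ (⊤ : ℕ∞) k₂ I)
    (hkunit : ∀ u ∈ I, k₁ u ^ 2 + k₂ u ^ 2 = 1)
    (hkrel : ∀ u ∈ I, -(k₁ u) * x u + lam * k₂ u * b u = 0)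
    (n s : ℝ × ℝ → ℝ × ℝ × ℝ)
    (hn : ∀ u v : ℝ, n (u, v) =
      (k₂ u * a u * cos v + k₁ u * sin v,
       k₂ u * a u * sin v - k₁ u * cos v, k₂ u * b u))
    (hs : ∀ u v : ℝ, s (u, v) = (-(b u) * cos v, -(b u) * sin v, a u))
    (tt : ℝ) (htt : tt ≠ 0)
    (A θ : ℝ → ℝ) (hA : ContDiffOn ℝ (⊤ : ℕ∞) A I) (hθ : ContDiffOn ℝ (⊤ : ℕ∞) θ I)
    (hAθ₁ : ∀ u ∈ I, x u + tt * k₂ u * a u = A u * cos (θ u))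
    (hAθ₂ : ∀ u ∈ I, tt * k₁ u = A u * sin (θ u))
    (ℓ₁ ℓ₂ : ℝ → ℝ)
    (hℓ₁ : ContDiffOn ℝ (⊤ : ℕ∞) ℓ₁ I) (hℓ₂ : ContDiffOn ℝ (⊤ : ℕ∞) ℓ₂ I)
    (hℓunit : ∀ u ∈ I, ℓ₁ u ^ 2 + ℓ₂ u ^ 2 = 1)
    (hℓrel : ∀ u ∈ I, lam * ℓ₁ u * b u + ℓ₂ u * x u * a u = 0)
    (t : ℝ) (ht : t ≠ 0)
    (B τ : ℝ → ℝ) (hB : ContDiffOn ℝ (⊤ : ℕ∞) B I) (hτ : ContDiffOn ℝ (⊤ : ℕ∞) τ I)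
    (hBτ₁ : ∀ u ∈ I, x u - t * ℓ₁ u = B u * cos (τ u))
    (hBτ₂ : ∀ u ∈ I, -(t * ℓ₂ u) = B u * sin (τ u))
    (heq : ∀ u ∈ I, ∀ v : ℝ,
      ((x u * cos v, x u * sin v, z u + lam * v) : ℝ × ℝ × ℝ) + tt • n (u, v) =
        (B u * cos v, B u * sin v, z u - lam * τ u + lam * v)) :
    (∀ u₁ ∈ I, ∀ u₂ ∈ I, x u₁ = x u₂) ∧ ∀ u ∈ I, ℓ u = 0 := by
    -- Step 1: pointwise facts on I
  have hk1 : ∀ u ∈ I, k₁ u = 0 := by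
    intro u hu
    have h := heq u hu (Real.pi / 2)
    rw [hn] at h
    have h1 := congrArg Prod.fst h
    simp only [Prod.fst_add, Prod.smul_fst, smul_eq_mul,
      Real.cos_pi_div_two, Real.sin_pi_div_two] at h1
    have : tt * k₁ u = 0 := by linarith [h1]
    exact (mul_eq_zero.mp this).resolve_left htt
  have hb0 : ∀ u ∈ I, b u = 0 := by
    intro u hu
    have hk2 : k₂ u ^ 2 = 1 := by have := hkunit u hu; have := hk1 u hu; nlinarith
    have hrel := hkrel u hu
    rw [hk1 u hu] at hrel
    have : lam * k₂ u * b u = 0 := by linarith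
    rcases mul_eq_zero.mp this with h | h
    · rcases mul_eq_zero.mp h with h | h
      · exact absurd h hlam
      · exfalso; rw [h] at hk2; norm_num at hk2
    · exact h
  have ha2 : ∀ u ∈ I, a u ^ 2 = 1 := by
    intro u hu; have := hunit u hu; have := hb0 u hu; nlinarith
  have hxd : ∀ u ∈ I, deriv x u = 0 := by
    intro u hu
    have h := hLeg u hu
    rw [hb0 u hu] at h
    have ha : a u ≠ 0 := by intro h0; have := ha2 u hu; rw [h0] at this; norm_num at this
    have : deriv x u * a u = 0 := by linarith
    exact (mul_eq_zero.mp this).resolve_right ha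
  have hbd : ∀ u ∈ I, deriv b u = 0 := by
    intro u hu
    have hev : b =ᶠ[nhds u] (fun _ => (0:ℝ)) :=
      Filter.eventuallyEq_of_mem (hIo.mem_nhds hu) hb0
    rw [hev.deriv_eq]; simp
  constructor
  · -- x is constant on I
    have hconv : Convex ℝ I := hIc.convex
    intro u₁ h₁ u₂ h₂
    have hdiff : DifferentiableOn ℝ x I := (hx.differentiableOn (by simp))
    refine hconv.is_const_of_fderivWithin_eq_zero hdiff (fun w hw => ?_) h₁ h₂
    rw [fderivWithin_of_isOpen hIo hw]
    have hda : DifferentiableAt ℝ x w := hdiff.differentiableAt (hIo.mem_nhds hw)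
    ext v
    simp [← toSpanSingleton_deriv, hxd w hw]
  · intro u hu
    rw [hl u hu, hb0 u hu, hbd u hu]
    ring
end
end

section
/- Let I be an open interval, t₀ ∈ I, and let ℓ, β: I → ℝ be C^∞ functions. Define θ(t) = ∫_{t₀}^t ℓ(s) ds, γ(t) = (-∫_{t₀}^t β(s)sin θ(s) ds, ∫_{t₀}^t β(s)cos θ(s) ds), and ν(t) = (cos θ(t), sin θ(t)). Then (γ,ν): I → ℝ² × S¹ is a Legendre curve whose curvature is exactly (ℓ,β). In particular, for any C^∞ pair (ℓ,β) there exists a Legendre curve with that curvature. -/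
noncomputable section

open Real

open scoped ContDiff in
private lemma contDiffOn_omega_of_deriv {f g : ℝ → ℝ} {s : Set ℝ} (hs : IsOpen s)
    (hg : ContDiffOn ℝ (⊤ : ℕ∞) g s) (hf : ∀ t ∈ s, HasDerivAt f (g t) t) :
    ContDiffOn ℝ (⊤ : ℕ∞) f s := by
  rw [contDiffOn_infty_iff_deriv_of_isOpen hs]
  exact ⟨fun t ht => (hf t ht).differentiableAt.differentiableWithinAt,
    hg.congr fun t ht => (hf t ht).deriv⟩

private lemma hasDerivAt_intInt
    {I : Set ℝ} (hIo : IsOpen I) (hIc : I.OrdConnected)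
    {t₀ : ℝ} (ht₀ : t₀ ∈ I) {f : ℝ → ℝ} (hf : ContinuousOn f I)
    {t : ℝ} (ht : t ∈ I) :
    HasDerivAt (fun x => ∫ s in t₀..x, f s) (f t) t := by
  apply intervalIntegral.integral_hasDerivAt_right
  · exact (hf.mono (hIc.uIcc_subset ht₀ ht)).intervalIntegrable
  · exact hf.stronglyMeasurableAtFilter hIo t ht
  · exact hf.continuousAt (hIo.mem_nhds ht)

/-- Existence theorem for Legendre curves: the explicit integral formulas give
a Legendre curve whose curvature is exactly `(ℓ, β)`. -/
theorem legendre_curve_existence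
    (I : Set ℝ) (hIo : IsOpen I) (hIc : I.OrdConnected)
    (t₀ : ℝ) (ht₀ : t₀ ∈ I)
    (ℓ β : ℝ → ℝ)
    (hℓ : ContDiffOn ℝ (⊤ : ℕ∞) ℓ I) (hβ : ContDiffOn ℝ (⊤ : ℕ∞) β I)
    (θ : ℝ → ℝ) (hθ : ∀ t : ℝ, θ t = ∫ s in t₀..t, ℓ s)
    (γ : ℝ → ℝ × ℝ)
    (hγ : ∀ t : ℝ, γ t =
      (-∫ s in t₀..t, β s * sin (θ s), ∫ s in t₀..t, β s * cos (θ s)))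
    (ν : ℝ → ℝ × ℝ)
    (hν : ∀ t : ℝ, ν t = (cos (θ t), sin (θ t))) :
    ContDiffOn ℝ (⊤ : ℕ∞) γ I ∧ ContDiffOn ℝ (⊤ : ℕ∞) ν I ∧
    (∀ t ∈ I, (ν t).1 ^ 2 + (ν t).2 ^ 2 = 1) ∧
    (∀ t ∈ I, (deriv γ t).1 * (ν t).1 + (deriv γ t).2 * (ν t).2 = 0) ∧
    (∀ t ∈ I, -(deriv ν t).1 * (ν t).2 + (deriv ν t).2 * (ν t).1 = ℓ t) ∧
    (∀ t ∈ I, -(deriv γ t).1 * (ν t).2 + (deriv γ t).2 * (ν t).1 = β t) := by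
  have hθfun : θ = fun x => ∫ s in t₀..x, ℓ s := funext hθ
  have hθd : ∀ t ∈ I, HasDerivAt θ (ℓ t) t := by
    intro t ht
    rw [hθfun]
    exact hasDerivAt_intInt hIo hIc ht₀ hℓ.continuousOn ht
  have hθdiff : DifferentiableOn ℝ θ I := fun t ht =>
    ((hθd t ht).differentiableAt).differentiableWithinAt
  have hθC : ContDiffOn ℝ (⊤ : ℕ∞) θ I := contDiffOn_omega_of_deriv hIo hℓ hθd
  -- continuity of integrands
  have hsin : ContDiffOn ℝ (⊤ : ℕ∞) (fun s => β s * sin (θ s)) I :=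
    hβ.mul (Real.contDiff_sin.comp_contDiffOn hθC)
  have hcos : ContDiffOn ℝ (⊤ : ℕ∞) (fun s => β s * cos (θ s)) I :=
    hβ.mul (Real.contDiff_cos.comp_contDiffOn hθC)
  have hγfun : γ = fun x =>
      ((-∫ s in t₀..x, β s * sin (θ s) : ℝ), (∫ s in t₀..x, β s * cos (θ s) : ℝ)) :=
    funext hγ
  have hνfun : ν = fun t => (cos (θ t), sin (θ t)) := funext hν
  have hγd : ∀ t ∈ I, HasDerivAt γ (-(β t * sin (θ t)), β t * cos (θ t)) t := by
    intro t ht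
    rw [hγfun]
    exact ((hasDerivAt_intInt hIo hIc ht₀ hsin.continuousOn ht).neg).prodMk
      (hasDerivAt_intInt hIo hIc ht₀ hcos.continuousOn ht)
  have hνd : ∀ t ∈ I, HasDerivAt ν (-sin (θ t) * ℓ t, cos (θ t) * ℓ t) t := by
    intro t ht
    rw [hνfun]
    exact ((hθd t ht).cos).prodMk ((hθd t ht).sin)
  have hγC : ContDiffOn ℝ (⊤ : ℕ∞) γ I := by
    rw [hγfun]
    exact ((contDiffOn_omega_of_deriv hIo hsin
        (fun t ht => hasDerivAt_intInt hIo hIc ht₀ hsin.continuousOn ht)).neg).prodMk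
      (contDiffOn_omega_of_deriv hIo hcos
        (fun t ht => hasDerivAt_intInt hIo hIc ht₀ hcos.continuousOn ht))
  have hνC : ContDiffOn ℝ (⊤ : ℕ∞) ν I := by
    rw [hνfun]
    exact (Real.contDiff_cos.comp_contDiffOn hθC).prodMk
      (Real.contDiff_sin.comp_contDiffOn hθC)
  refine ⟨hγC, hνC, ?_, ?_, ?_, ?_⟩
  · intro t ht
    rw [hν t]
    simp [cos_sq_add_sin_sq]
  · intro t ht
    rw [(hγd t ht).deriv, hν t]
    ring
  · intro t ht
    rw [(hνd t ht).deriv, hν t]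
    dsimp only
    linear_combination (ℓ t) * sin_sq_add_cos_sq (θ t)
  · intro t ht
    rw [(hγd t ht).deriv, hν t]
    dsimp only
    linear_combination (β t) * sin_sq_add_cos_sq (θ t)
end
end

section
/- Let (γ,ν) and (γ̃,ν̃): I → ℝ² × S¹ be Legendre curves on an open interval I, with curvatures (ℓ,β) and (ℓ̃,β̃) respectively. Then (γ,ν) and (γ̃,ν̃) are congruent as Legendre curves — i.e., there exist A ∈ SO(2) and a ∈ ℝ² with γ̃(t) = A(γ(t)) + a and ν̃(t) = A(ν(t)) for all t ∈ I — if and only if ℓ(t) = ℓ̃(t) and β(t) = β̃(t) for all t ∈ I. -/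
noncomputable section

open Real

lemma lcu_hasDerivAt_fst {f : ℝ → ℝ × ℝ} {d : ℝ × ℝ} {t : ℝ} (h : HasDerivAt f d t) :
    HasDerivAt (fun s => (f s).1) d.1 t := by
  simpa using h.hasFDerivAt.fst.hasDerivAt

lemma lcu_hasDerivAt_snd {f : ℝ → ℝ × ℝ} {d : ℝ × ℝ} {t : ℝ} (h : HasDerivAt f d t) :
    HasDerivAt (fun s => (f s).2) d.2 t := by
  simpa using h.hasFDerivAt.snd.hasDerivAt

lemma lcu_const_on {s : Set ℝ} (hso : IsOpen s) (hsc : Convex ℝ s) {f : ℝ → ℝ}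
    (hf : ∀ t ∈ s, HasDerivAt f 0 t) {a b : ℝ} (ha : a ∈ s) (hb : b ∈ s) : f a = f b := by
  refine hsc.is_const_of_fderivWithin_eq_zero
    (fun t ht => ((hf t ht).differentiableAt).differentiableWithinAt) (fun t ht => ?_) ha hb
  rw [fderivWithin_of_isOpen hso ht, (hf t ht).hasFDerivAt.fderiv]
  ext x; simp

/-- Uniqueness theorem for Legendre curves
(by a rotation `A ∈ SO(2)` and a translation) iff their curvatures coincide. -/
theorem legendre_curve_uniqueness
    (I : Set ℝ) (hIo : IsOpen I) (hIc : I.OrdConnected)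
    (γ₁ ν₁ γ₂ ν₂ : ℝ → ℝ × ℝ)
    (hγ₁ : ContDiffOn ℝ (⊤ : ℕ∞) γ₁ I) (hν₁ : ContDiffOn ℝ (⊤ : ℕ∞) ν₁ I)
    (hγ₂ : ContDiffOn ℝ (⊤ : ℕ∞) γ₂ I) (hν₂ : ContDiffOn ℝ (⊤ : ℕ∞) ν₂ I)
    (hu₁ : ∀ t ∈ I, (ν₁ t).1 ^ 2 + (ν₁ t).2 ^ 2 = 1)
    (hu₂ : ∀ t ∈ I, (ν₂ t).1 ^ 2 + (ν₂ t).2 ^ 2 = 1)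
    (hL₁ : ∀ t ∈ I, (deriv γ₁ t).1 * (ν₁ t).1 + (deriv γ₁ t).2 * (ν₁ t).2 = 0)
    (hL₂ : ∀ t ∈ I, (deriv γ₂ t).1 * (ν₂ t).1 + (deriv γ₂ t).2 * (ν₂ t).2 = 0)
    (ℓ₁ β₁ ℓ₂ β₂ : ℝ → ℝ)
    (hℓ₁ : ∀ t ∈ I, ℓ₁ t = -(deriv ν₁ t).1 * (ν₁ t).2 + (deriv ν₁ t).2 * (ν₁ t).1)
    (hβ₁ : ∀ t ∈ I, β₁ t = -(deriv γ₁ t).1 * (ν₁ t).2 + (deriv γ₁ t).2 * (ν₁ t).1)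
    (hℓ₂ : ∀ t ∈ I, ℓ₂ t = -(deriv ν₂ t).1 * (ν₂ t).2 + (deriv ν₂ t).2 * (ν₂ t).1)
    (hβ₂ : ∀ t ∈ I, β₂ t = -(deriv γ₂ t).1 * (ν₂ t).2 + (deriv γ₂ t).2 * (ν₂ t).1) :
    (∃ p q : ℝ, p ^ 2 + q ^ 2 = 1 ∧ ∃ a : ℝ × ℝ, ∀ t ∈ I,
        γ₂ t = (p * (γ₁ t).1 - q * (γ₁ t).2 + a.1,
                q * (γ₁ t).1 + p * (γ₁ t).2 + a.2) ∧
        ν₂ t = (p * (ν₁ t).1 - q * (ν₁ t).2, q * (ν₁ t).1 + p * (ν₁ t).2)) ↔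
      ∀ t ∈ I, ℓ₁ t = ℓ₂ t ∧ β₁ t = β₂ t := by
  -- basic differentiability facts
  have D : ∀ (f : ℝ → ℝ × ℝ), ContDiffOn ℝ (⊤ : ℕ∞) f I → ∀ t ∈ I, HasDerivAt f (deriv f t) t := by
    intro f hf t ht
    exact ((hf.contDiffAt (hIo.mem_nhds ht)).differentiableAt (by simp)).hasDerivAt
  constructor
  · -- congruence implies equal curvatures
    rintro ⟨p, q, hpq, a, h⟩ t ht
    have hν := fun s hs => (h s hs).2
    have hγ := fun s hs => (h s hs).1
    have hdν₁ := D ν₁ hν₁ t ht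
    have hdν₂ := D ν₂ hν₂ t ht
    have hdγ₁ := D γ₁ hγ₁ t ht
    have hdγ₂ := D γ₂ hγ₂ t ht
    -- derivative components of ν₂
    have eν1 : (deriv ν₂ t).1 = p * (deriv ν₁ t).1 - q * (deriv ν₁ t).2 := by
      have h1 : HasDerivAt (fun s => (ν₂ s).1) (p * (deriv ν₁ t).1 - q * (deriv ν₁ t).2) t := by
        refine HasDerivAt.congr_of_eventuallyEq
          (((lcu_hasDerivAt_fst hdν₁).const_mul p).sub ((lcu_hasDerivAt_snd hdν₁).const_mul q)) ?_
        filter_upwards [hIo.mem_nhds ht] with s hs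
        rw [hν s hs]; rfl
      exact (lcu_hasDerivAt_fst hdν₂).unique h1
    have eν2 : (deriv ν₂ t).2 = q * (deriv ν₁ t).1 + p * (deriv ν₁ t).2 := by
      have h1 : HasDerivAt (fun s => (ν₂ s).2) (q * (deriv ν₁ t).1 + p * (deriv ν₁ t).2) t := by
        refine HasDerivAt.congr_of_eventuallyEq
          (((lcu_hasDerivAt_fst hdν₁).const_mul q).add ((lcu_hasDerivAt_snd hdν₁).const_mul p)) ?_
        filter_upwards [hIo.mem_nhds ht] with s hs
        rw [hν s hs]; rfl
      exact (lcu_hasDerivAt_snd hdν₂).unique h1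
    have eγ1 : (deriv γ₂ t).1 = p * (deriv γ₁ t).1 - q * (deriv γ₁ t).2 := by
      have h1 : HasDerivAt (fun s => (γ₂ s).1) (p * (deriv γ₁ t).1 - q * (deriv γ₁ t).2) t := by
        refine HasDerivAt.congr_of_eventuallyEq
          ((((lcu_hasDerivAt_fst hdγ₁).const_mul p).sub
            ((lcu_hasDerivAt_snd hdγ₁).const_mul q)).add_const a.1) ?_
        filter_upwards [hIo.mem_nhds ht] with s hs
        rw [hγ s hs]; rfl
      exact (lcu_hasDerivAt_fst hdγ₂).unique h1
    have eγ2 : (deriv γ₂ t).2 = q * (deriv γ₁ t).1 + p * (deriv γ₁ t).2 := by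
      have h1 : HasDerivAt (fun s => (γ₂ s).2) (q * (deriv γ₁ t).1 + p * (deriv γ₁ t).2) t := by
        refine HasDerivAt.congr_of_eventuallyEq
          ((((lcu_hasDerivAt_fst hdγ₁).const_mul q).add
            ((lcu_hasDerivAt_snd hdγ₁).const_mul p)).add_const a.2) ?_
        filter_upwards [hIo.mem_nhds ht] with s hs
        rw [hγ s hs]; rfl
      exact (lcu_hasDerivAt_snd hdγ₂).unique h1
    have hν2t := hν t ht
    have hc2 : (ν₂ t).1 = p * (ν₁ t).1 - q * (ν₁ t).2 := by rw [hν2t]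
    have hs2 : (ν₂ t).2 = q * (ν₁ t).1 + p * (ν₁ t).2 := by rw [hν2t]
    constructor
    · rw [hℓ₁ t ht, hℓ₂ t ht, eν1, eν2, hc2, hs2]
      linear_combination ((deriv ν₁ t).1 * (ν₁ t).2 - (deriv ν₁ t).2 * (ν₁ t).1) * hpq
    · rw [hβ₁ t ht, hβ₂ t ht, eγ1, eγ2, hc2, hs2]
      linear_combination ((deriv γ₁ t).1 * (ν₁ t).2 - (deriv γ₁ t).2 * (ν₁ t).1) * hpq
  · -- equal curvatures imply congruence
    intro h
    rcases Set.eq_empty_or_nonempty I with hI | ⟨t₀, ht₀⟩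
    · exact ⟨1, 0, by norm_num, (0, 0), fun t ht => by simp [hI] at ht⟩
    have hconv : Convex ℝ I := convex_iff_ordConnected.mpr hIc
    -- orthogonality of ν and ν'
    have horth : ∀ (ν : ℝ → ℝ × ℝ), ContDiffOn ℝ (⊤ : ℕ∞) ν I →
        (∀ t ∈ I, (ν t).1 ^ 2 + (ν t).2 ^ 2 = 1) → ∀ t ∈ I,
        (deriv ν t).1 * (ν t).1 + (deriv ν t).2 * (ν t).2 = 0 := by
      intro ν hν hu t ht
      have hd := D ν hν t ht
      have h1 : HasDerivAt (fun s => (ν s).1 ^ 2 + (ν s).2 ^ 2)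
          (2 * (ν t).1 ^ 1 * (deriv ν t).1 + 2 * (ν t).2 ^ 1 * (deriv ν t).2) t :=
        ((lcu_hasDerivAt_fst hd).pow 2).add ((lcu_hasDerivAt_snd hd).pow 2)
      have h2 : HasDerivAt (fun s => (ν s).1 ^ 2 + (ν s).2 ^ 2) 0 t := by
        refine HasDerivAt.congr_of_eventuallyEq (hasDerivAt_const t 1) ?_
        filter_upwards [hIo.mem_nhds ht] with s hs
        exact hu s hs
      have := h1.unique h2
      linear_combination this / 2
    have horth₁ := horth ν₁ hν₁ hu₁
    have horth₂ := horth ν₂ hν₂ hu₂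
    -- decomposition of derivatives in the moving frame
    have νdec₁ : ∀ t ∈ I, (deriv ν₁ t).1 = -(ℓ₁ t) * (ν₁ t).2 ∧
        (deriv ν₁ t).2 = ℓ₁ t * (ν₁ t).1 := by
      intro t ht
      constructor
      · rw [hℓ₁ t ht]
        linear_combination (-(deriv ν₁ t).1) * (hu₁ t ht) + (ν₁ t).1 * (horth₁ t ht)
      · rw [hℓ₁ t ht]
        linear_combination (-(deriv ν₁ t).2) * (hu₁ t ht) + (ν₁ t).2 * (horth₁ t ht)
    have νdec₂ : ∀ t ∈ I, (deriv ν₂ t).1 = -(ℓ₂ t) * (ν₂ t).2 ∧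
        (deriv ν₂ t).2 = ℓ₂ t * (ν₂ t).1 := by
      intro t ht
      constructor
      · rw [hℓ₂ t ht]
        linear_combination (-(deriv ν₂ t).1) * (hu₂ t ht) + (ν₂ t).1 * (horth₂ t ht)
      · rw [hℓ₂ t ht]
        linear_combination (-(deriv ν₂ t).2) * (hu₂ t ht) + (ν₂ t).2 * (horth₂ t ht)
    have γdec₁ : ∀ t ∈ I, (deriv γ₁ t).1 = -(β₁ t) * (ν₁ t).2 ∧
        (deriv γ₁ t).2 = β₁ t * (ν₁ t).1 := by
      intro t ht
      constructor
      · rw [hβ₁ t ht]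
        linear_combination (-(deriv γ₁ t).1) * (hu₁ t ht) + (ν₁ t).1 * (hL₁ t ht)
      · rw [hβ₁ t ht]
        linear_combination (-(deriv γ₁ t).2) * (hu₁ t ht) + (ν₁ t).2 * (hL₁ t ht)
    have γdec₂ : ∀ t ∈ I, (deriv γ₂ t).1 = -(β₂ t) * (ν₂ t).2 ∧
        (deriv γ₂ t).2 = β₂ t * (ν₂ t).1 := by
      intro t ht
      constructor
      · rw [hβ₂ t ht]
        linear_combination (-(deriv γ₂ t).1) * (hu₂ t ht) + (ν₂ t).1 * (hL₂ t ht)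
      · rw [hβ₂ t ht]
        linear_combination (-(deriv γ₂ t).2) * (hu₂ t ht) + (ν₂ t).2 * (hL₂ t ht)
    -- the rotation entries, as functions, are constant
    have hPd : ∀ t ∈ I, HasDerivAt
        (fun s => (ν₁ s).1 * (ν₂ s).1 + (ν₁ s).2 * (ν₂ s).2) 0 t := by
      intro t ht
      have hd₁ := D ν₁ hν₁ t ht
      have hd₂ := D ν₂ hν₂ t ht
      have hd : HasDerivAt (fun s => (ν₁ s).1 * (ν₂ s).1 + (ν₁ s).2 * (ν₂ s).2)
          ((deriv ν₁ t).1 * (ν₂ t).1 + (ν₁ t).1 * (deriv ν₂ t).1 +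
           ((deriv ν₁ t).2 * (ν₂ t).2 + (ν₁ t).2 * (deriv ν₂ t).2)) t :=
        ((lcu_hasDerivAt_fst hd₁).mul (lcu_hasDerivAt_fst hd₂)).add
          ((lcu_hasDerivAt_snd hd₁).mul (lcu_hasDerivAt_snd hd₂))
      have e : (deriv ν₁ t).1 * (ν₂ t).1 + (ν₁ t).1 * (deriv ν₂ t).1 +
           ((deriv ν₁ t).2 * (ν₂ t).2 + (ν₁ t).2 * (deriv ν₂ t).2) = 0 := by
        rw [(νdec₁ t ht).1, (νdec₁ t ht).2, (νdec₂ t ht).1, (νdec₂ t ht).2]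
        linear_combination ((ν₁ t).1 * (ν₂ t).2 - (ν₁ t).2 * (ν₂ t).1) * (h t ht).1
      exact e ▸ hd
    have hQd : ∀ t ∈ I, HasDerivAt
        (fun s => (ν₁ s).1 * (ν₂ s).2 - (ν₁ s).2 * (ν₂ s).1) 0 t := by
      intro t ht
      have hd₁ := D ν₁ hν₁ t ht
      have hd₂ := D ν₂ hν₂ t ht
      have hd : HasDerivAt (fun s => (ν₁ s).1 * (ν₂ s).2 - (ν₁ s).2 * (ν₂ s).1)
          ((deriv ν₁ t).1 * (ν₂ t).2 + (ν₁ t).1 * (deriv ν₂ t).2 -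
           ((deriv ν₁ t).2 * (ν₂ t).1 + (ν₁ t).2 * (deriv ν₂ t).1)) t :=
        ((lcu_hasDerivAt_fst hd₁).mul (lcu_hasDerivAt_snd hd₂)).sub
          ((lcu_hasDerivAt_snd hd₁).mul (lcu_hasDerivAt_fst hd₂))
      have e : (deriv ν₁ t).1 * (ν₂ t).2 + (ν₁ t).1 * (deriv ν₂ t).2 -
           ((deriv ν₁ t).2 * (ν₂ t).1 + (ν₁ t).2 * (deriv ν₂ t).1) = 0 := by
        rw [(νdec₁ t ht).1, (νdec₁ t ht).2, (νdec₂ t ht).1, (νdec₂ t ht).2]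
        linear_combination (-((ν₁ t).1 * (ν₂ t).1 + (ν₁ t).2 * (ν₂ t).2)) * (h t ht).1
      exact e ▸ hd
    set p : ℝ := (ν₁ t₀).1 * (ν₂ t₀).1 + (ν₁ t₀).2 * (ν₂ t₀).2 with hp
    set q : ℝ := (ν₁ t₀).1 * (ν₂ t₀).2 - (ν₁ t₀).2 * (ν₂ t₀).1 with hq
    have hPconst : ∀ t ∈ I, (ν₁ t).1 * (ν₂ t).1 + (ν₁ t).2 * (ν₂ t).2 = p :=
      fun t ht => lcu_const_on hIo hconv hPd ht ht₀
    have hQconst : ∀ t ∈ I, (ν₁ t).1 * (ν₂ t).2 - (ν₁ t).2 * (ν₂ t).1 = q :=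
      fun t ht => lcu_const_on hIo hconv hQd ht ht₀
    have hpq : p ^ 2 + q ^ 2 = 1 := by
      rw [hp, hq]
      linear_combination ((ν₂ t₀).1 ^ 2 + (ν₂ t₀).2 ^ 2) * (hu₁ t₀ ht₀) + hu₂ t₀ ht₀
    -- the rotation maps ν₁ to ν₂
    have hνrel : ∀ t ∈ I, (ν₂ t).1 = p * (ν₁ t).1 - q * (ν₁ t).2 ∧
        (ν₂ t).2 = q * (ν₁ t).1 + p * (ν₁ t).2 := by
      intro t ht
      constructor
      · rw [← hPconst t ht, ← hQconst t ht]
        linear_combination (-(ν₂ t).1) * (hu₁ t ht)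
      · rw [← hPconst t ht, ← hQconst t ht]
        linear_combination (-(ν₂ t).2) * (hu₁ t ht)
    -- the translation part
    have hG1d : ∀ t ∈ I, HasDerivAt
        (fun s => (γ₂ s).1 - (p * (γ₁ s).1 - q * (γ₁ s).2)) 0 t := by
      intro t ht
      have hd₁ := D γ₁ hγ₁ t ht
      have hd₂ := D γ₂ hγ₂ t ht
      have hd : HasDerivAt (fun s => (γ₂ s).1 - (p * (γ₁ s).1 - q * (γ₁ s).2))
          ((deriv γ₂ t).1 - (p * (deriv γ₁ t).1 - q * (deriv γ₁ t).2)) t :=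
        (lcu_hasDerivAt_fst hd₂).sub
          (((lcu_hasDerivAt_fst hd₁).const_mul p).sub ((lcu_hasDerivAt_snd hd₁).const_mul q))
      have e : (deriv γ₂ t).1 - (p * (deriv γ₁ t).1 - q * (deriv γ₁ t).2) = 0 := by
        rw [(γdec₁ t ht).1, (γdec₁ t ht).2, (γdec₂ t ht).1, (hνrel t ht).2]
        linear_combination (q * (ν₁ t).1 + p * (ν₁ t).2) * (h t ht).2
      exact e ▸ hd
    have hG2d : ∀ t ∈ I, HasDerivAt
        (fun s => (γ₂ s).2 - (q * (γ₁ s).1 + p * (γ₁ s).2)) 0 t := by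
      intro t ht
      have hd₁ := D γ₁ hγ₁ t ht
      have hd₂ := D γ₂ hγ₂ t ht
      have hd : HasDerivAt (fun s => (γ₂ s).2 - (q * (γ₁ s).1 + p * (γ₁ s).2))
          ((deriv γ₂ t).2 - (q * (deriv γ₁ t).1 + p * (deriv γ₁ t).2)) t :=
        (lcu_hasDerivAt_snd hd₂).sub
          (((lcu_hasDerivAt_fst hd₁).const_mul q).add ((lcu_hasDerivAt_snd hd₁).const_mul p))
      have e : (deriv γ₂ t).2 - (q * (deriv γ₁ t).1 + p * (deriv γ₁ t).2) = 0 := by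
        rw [(γdec₁ t ht).1, (γdec₁ t ht).2, (γdec₂ t ht).2, (hνrel t ht).1]
        linear_combination (q * (ν₁ t).2 - p * (ν₁ t).1) * (h t ht).2
      exact e ▸ hd
    refine ⟨p, q, hpq, ((γ₂ t₀).1 - (p * (γ₁ t₀).1 - q * (γ₁ t₀).2),
      (γ₂ t₀).2 - (q * (γ₁ t₀).1 + p * (γ₁ t₀).2)), fun t ht => ⟨?_, ?_⟩⟩
    · have e1 : (γ₂ t).1 - (p * (γ₁ t).1 - q * (γ₁ t).2) =
          (γ₂ t₀).1 - (p * (γ₁ t₀).1 - q * (γ₁ t₀).2) :=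
        lcu_const_on hIo hconv hG1d ht ht₀
      have e2 : (γ₂ t).2 - (q * (γ₁ t).1 + p * (γ₁ t).2) =
          (γ₂ t₀).2 - (q * (γ₁ t₀).1 + p * (γ₁ t₀).2) :=
        lcu_const_on hIo hconv hG2d ht ht₀
      exact Prod.ext (by dsimp only; linarith) (by dsimp only; linarith)
    · exact Prod.ext (by dsimp only; exact (hνrel t ht).1) (by dsimp only; exact (hνrel t ht).2)
end
end
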